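/- arXiv:2005.12354 — 9 statements merged into one kernel-verified Lean document; each statement's English description precedes it below -/
import Mathlib

section
/- Let S ⊆ ℕ^d be a good semigroup, E ⊆ S a good ideal, α ∈ E and F ⊊ I. Suppose there exists a set H ⊆ I of cardinality d−1 with F ⊆ H such that Δ^E_G(α) = ∅ for every set G with F ⊆ G ⊆ H. Then Δ^E_{F̂}(α) = ∅. -/
/-! Common definitions for good semigroups in `ℕ^d`. -/

/-- A *good semigroup*: a submonoid of `ℕ^d` satisfying (G1), (G2), (G3). -/
def IsGoodSemigroup {d : ℕ} (S : Set (Fin d → ℕ)) : Prop :=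
  (0 : Fin d → ℕ) ∈ S ∧
  (∀ α ∈ S, ∀ β ∈ S, α + β ∈ S) ∧
  (∀ α ∈ S, ∀ β ∈ S, α ⊓ β ∈ S) ∧
  (∀ α ∈ S, ∀ β ∈ S, α ≠ β → ∀ i : Fin d, α i = β i →
    ∃ ε ∈ S, α i < ε i ∧ ∀ j : Fin d, j ≠ i →
      min (α j) (β j) ≤ ε j ∧ (α j ≠ β j → ε j = min (α j) (β j))) ∧
  (∃ c : Fin d → ℕ, ∀ x : Fin d → ℕ, c ≤ x → x ∈ S)

/-- A *good ideal* of `S`: a nonempty subset `E ⊆ S` with `E + S ⊆ E`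
satisfying (G1) and (G2). -/
def IsGoodIdeal {d : ℕ} (S E : Set (Fin d → ℕ)) : Prop :=
  E ⊆ S ∧ E.Nonempty ∧
  (∀ α ∈ E, ∀ σ ∈ S, α + σ ∈ E) ∧
  (∀ α ∈ E, ∀ β ∈ E, α ⊓ β ∈ E) ∧
  (∀ α ∈ E, ∀ β ∈ E, α ≠ β → ∀ i : Fin d, α i = β i →
    ∃ ε ∈ E, α i < ε i ∧ ∀ j : Fin d, j ≠ i →
      min (α j) (β j) ≤ ε j ∧ (α j ≠ β j → ε j = min (α j) (β j)))

/-- `Δ^E_F(α)`. -/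
def DeltaSet {d : ℕ} (E : Set (Fin d → ℕ)) (F : Finset (Fin d)) (α : Fin d → ℕ) :
    Set (Fin d → ℕ) :=
  {β | β ∈ E ∧ (∀ i ∈ F, β i = α i) ∧ ∀ j ∉ F, α j < β j}

/-- `Δ̃^E_F(α)`. -/
def DeltaTilde {d : ℕ} (E : Set (Fin d → ℕ)) (F : Finset (Fin d)) (α : Fin d → ℕ) :
    Set (Fin d → ℕ) :=
  {β | β ∈ E ∧ (∀ i ∈ F, β i = α i) ∧ ∀ j ∉ F, α j ≤ β j} \ {α}

/-- `c` is the conductor of `E`: the minimal element with `c + ℕ^d ⊆ E`. -/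
def IsConductor {d : ℕ} (E : Set (Fin d → ℕ)) (c : Fin d → ℕ) : Prop :=
  (∀ x : Fin d → ℕ, c ≤ x → x ∈ E) ∧
  ∀ c' : Fin d → ℕ, (∀ x : Fin d → ℕ, c' ≤ x → x ∈ E) → c ≤ c'

/-- `α ≤ β` are consecutive in `A`. -/
def ConsecutiveIn {d : ℕ} (A : Set (Fin d → ℕ)) (α β : Fin d → ℕ) : Prop :=
  α ∈ A ∧ β ∈ A ∧ α ≤ β ∧
  ∀ δ ∈ A, α ≤ δ → δ ≤ β → δ = α ∨ δ = β

/-- `α` is the complete infimum of the family `β` (with `Δ`-sets taken in `S`). -/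
def IsCompleteInf {d : ℕ} (S : Set (Fin d → ℕ)) (α : Fin d → ℕ) {r : ℕ}
    (β : Fin r → Fin d → ℕ) : Prop :=
  2 ≤ r ∧ ∃ F : Fin r → Finset (Fin d),
    (∀ j, (F j).Nonempty ∧ F j ≠ Finset.univ) ∧
    (∀ j, β j ∈ DeltaSet S (F j) α) ∧
    (∀ j k, j ≠ k → α = β j ⊓ β k) ∧
    (∀ x : Fin d, ∃ j, x ∉ F j)

/-- `α` is a complete infimum in `A` of the elements of the family `β`. -/
def IsCompleteInfIn {d : ℕ} (S A : Set (Fin d → ℕ)) (α : Fin d → ℕ) {r : ℕ}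
    (β : Fin r → Fin d → ℕ) : Prop :=
  α ∈ A ∧ (∀ k, β k ∈ A) ∧ IsCompleteInf S α β

/-- The order `≤≤`: `α = β` or `α_j < β_j` for every `j`. -/
def DomLE {d : ℕ} (α β : Fin d → ℕ) : Prop := α = β ∨ ∀ j, α j < β j

/-- The set `B`: maximal elements of `(S \ E) \ prev` with respect to `≤≤`. -/
def Bstep {d : ℕ} (S E prev : Set (Fin d → ℕ)) : Set (Fin d → ℕ) :=
  {α | α ∈ (S \ E) \ prev ∧ ∀ β ∈ (S \ E) \ prev, DomLE α β → β = α}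

/-- The set `C`: elements of `B` that are complete infima in `S \ E` of
elements of `B` (with `1 < r ≤ d`). -/
def Cstep {d : ℕ} (S E prev : Set (Fin d → ℕ)) : Set (Fin d → ℕ) :=
  {α | α ∈ Bstep S E prev ∧ ∃ r : ℕ, 1 < r ∧ r ≤ d ∧
    ∃ β : Fin r → Fin d → ℕ, (∀ k, β k ∈ Bstep S E prev) ∧
      IsCompleteInfIn S (S \ E) α β}

/-- `D = B \ C`. -/
def Dstep {d : ℕ} (S E prev : Set (Fin d → ℕ)) : Set (Fin d → ℕ) :=
  Bstep S E prev \ Cstep S E prev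

/-- `Dacc S E i = D^(1) ∪ ⋯ ∪ D^(i)`. -/
def Dacc {d : ℕ} (S E : Set (Fin d → ℕ)) : ℕ → Set (Fin d → ℕ)
  | 0 => ∅
  | (i + 1) => Dacc S E i ∪ Dstep S E (Dacc S E i)

/-- `N` is the number of levels of `S \ E`: the least `N` with
`S \ E = D^(1) ∪ ⋯ ∪ D^(N)`. -/
def IsLevelsNumber {d : ℕ} (S E : Set (Fin d → ℕ)) (N : ℕ) : Prop :=
  (S \ E) ⊆ Dacc S E N ∧ ∀ M : ℕ, (S \ E) ⊆ Dacc S E M → N ≤ M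

/-- The level `A_i := D^(N+1-i)` for `1 ≤ i ≤ N` (and `∅` otherwise). -/
def Alevel {d : ℕ} (S E : Set (Fin d → ℕ)) (N i : ℕ) : Set (Fin d → ℕ) :=
  if 1 ≤ i ∧ i ≤ N then Dstep S E (Dacc S E (N - i)) else ∅

/-- `α` is (the representative of) a `U`-subspace of `E` (w.r.t. conductor `cE`):
`α ∈ E` and `α_j = cE_j` for every `j ∉ U`. -/
def IsSubspaceRep {d : ℕ} (E : Set (Fin d → ℕ)) (cE : Fin d → ℕ)
    (U : Finset (Fin d)) (α : Fin d → ℕ) : Prop :=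
  α ∈ E ∧ ∀ j ∉ U, α j = cE j

/-- `β(U) ∈ Δ^E_F(α(U))`, at the level of representatives. -/
def SubDelta {d : ℕ} (E : Set (Fin d → ℕ)) (cE : Fin d → ℕ)
    (U F : Finset (Fin d)) (α β : Fin d → ℕ) : Prop :=
  IsSubspaceRep E cE U β ∧ (∀ j ∈ F, β j = α j) ∧
  ∀ j ∈ U, j ∉ F → α j < β j

/-- `β(U) ∈ Δ̃^E_F(α(U))`, at the level of representatives. -/
def SubDeltaT {d : ℕ} (E : Set (Fin d → ℕ)) (cE : Fin d → ℕ)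
    (U F : Finset (Fin d)) (α β : Fin d → ℕ) : Prop :=
  IsSubspaceRep E cE U β ∧ (∀ j ∈ F, β j = α j) ∧
  (∀ j ∈ U, j ∉ F → α j ≤ β j) ∧ ¬(∀ j ∈ U, β j = α j)

/-- `α(U) ≤ θ(U)` are consecutive among the `U`-subspaces of `S`. -/
def SubConsecutive {d : ℕ} (S : Set (Fin d → ℕ)) (cE : Fin d → ℕ)
    (U : Finset (Fin d)) (α β : Fin d → ℕ) : Prop :=
  IsSubspaceRep S cE U α ∧ IsSubspaceRep S cE U β ∧ (∀ i ∈ U, α i ≤ β i) ∧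
  ∀ δ : Fin d → ℕ, IsSubspaceRep S cE U δ → (∀ i ∈ U, α i ≤ δ i) →
    (∀ i ∈ U, δ i ≤ β i) → (∀ i ∈ U, δ i = α i) ∨ (∀ i ∈ U, δ i = β i)

/-- `α(U)` is the complete infimum of the family of `U`-subspaces `β`. -/
def SubIsCompleteInf {d : ℕ} (S : Set (Fin d → ℕ)) (cE : Fin d → ℕ)
    (U : Finset (Fin d)) (α : Fin d → ℕ) {r : ℕ}
    (β : Fin r → Fin d → ℕ) : Prop :=
  2 ≤ r ∧ ∃ F : Fin r → Finset (Fin d),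
    (∀ j, (F j).Nonempty ∧ F j ⊂ U) ∧
    (∀ j, SubDelta S cE U (F j) α (β j)) ∧
    (∀ j k, j ≠ k → ∀ i ∈ U, α i = min (β j i) (β k i)) ∧
    (∀ x : Fin d, ∃ j, x ∉ F j)


/-! If some `β ∈ Δ^E_{F̂}(α)` existed, then `β ≥ α`, `β ≠ α` (as `F ≠ ∅`) and `β` agrees with `α` at the
single index `i ∉ H`. Axiom (G2) for `α, β` at `i` yields `ε ∈ E` with `ε ≥ α`, `ε_i > α_i` and
`ε = α` on `F`, so `ε ∈ Δ^E_G(α)` for the set `G ⊇ F` of indices where `ε` and `α` agree, and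
`G ⊆ H` because `i ∉ G`. The degenerate case `F = ∅` is excluded by the conductor: `Δ^E_∅(α)`
contains `α + c + 1`. -/

lemma Finset.exists_compl_eq_singleton {ι : Type*} [Fintype ι] [DecidableEq ι] [Nonempty ι]
    {H : Finset ι} (hH : H.card = Fintype.card ι - 1) : ∃ i, Hᶜ = {i} := by
  refine Finset.card_eq_one.mp ?_
  have : 0 < Fintype.card ι := Fintype.card_pos
  rw [Finset.card_compl, hH]
  omega

section GoodIdeal

variable {d : ℕ} {S E : Set (Fin d → ℕ)} {α : Fin d → ℕ}

lemma mem_deltaSet_filter_eq {ε : Fin d → ℕ} (hε : ε ∈ E) (hαε : α ≤ ε) :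
    ε ∈ DeltaSet E {j | ε j = α j} α := by
  refine ⟨hε, fun j hj => (Finset.mem_filter.mp hj).2, fun j hj => ?_⟩
  exact lt_of_le_of_ne (hαε j) fun h => hj (Finset.mem_filter.mpr ⟨Finset.mem_univ j, h.symm⟩)

lemma deltaSet_empty_nonempty (hS : IsGoodSemigroup S) (hE : IsGoodIdeal S E) (hα : α ∈ E) :
    (DeltaSet E ∅ α).Nonempty := by
  obtain ⟨c, hc⟩ := hS.2.2.2.2
  have hS_c : c + 1 ∈ S := hc _ fun j => Nat.le_succ (c j)
  exact ⟨α + (c + 1), hE.2.2.1 α hα _ hS_c, by simp, fun j _ => by simp⟩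

lemma exists_deltaSet_nonempty_of_deltaSet_compl_nonempty (hE : IsGoodIdeal S E) (hα : α ∈ E)
    {F : Finset (Fin d)} (hF : F.Nonempty) {i : Fin d} (hi : i ∉ F)
    (hΔ : (DeltaSet E Fᶜ α).Nonempty) :
    ∃ G : Finset (Fin d), F ⊆ G ∧ i ∉ G ∧ (DeltaSet E G α).Nonempty := by
  obtain ⟨β, hβE, hβ_eq, hβ_gt⟩ := hΔ
  have hF_gt : ∀ j ∈ F, α j < β j := fun j hj => hβ_gt j (Finset.notMem_compl.mpr hj)
  have hαβ : α ≤ β := fun j => by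
    by_cases hj : j ∈ F
    · exact (hF_gt j hj).le
    · exact (hβ_eq j (Finset.mem_compl.mpr hj)).ge
  have hne : α ≠ β := by
    obtain ⟨f, hf⟩ := hF
    exact fun h => (hF_gt f hf).ne (congrFun h f)
  obtain ⟨ε, hεE, hε_i, hε⟩ :=
    hE.2.2.2.2 α hα β hβE hne i (hβ_eq i (Finset.mem_compl.mpr hi)).symm
  have hαε : α ≤ ε := fun j => by
    by_cases hj : j = i
    · exact hj ▸ hε_i.le
    · simpa [min_eq_left (hαβ j)] using (hε j hj).1
  refine ⟨({j | ε j = α j} : Finset (Fin d)), fun j hj => ?_, by simpa using hε_i.ne',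
    ⟨ε, mem_deltaSet_filter_eq hεE hαε⟩⟩
  have hji : j ≠ i := fun h => hi (h ▸ hj)
  simpa [min_eq_left (hαβ j)] using (hε j hji).2 (hF_gt j hj).ne

end GoodIdeal

theorem stmt_0_general {d : ℕ} (S E : Set (Fin d → ℕ))
    (hS : IsGoodSemigroup S) (hE : IsGoodIdeal S E)
    (α : Fin d → ℕ) (hα : α ∈ E)
    (F H : Finset (Fin d))
    (hH : H.card = d - 1) (hFH : F ⊆ H)
    (hempty : ∀ G : Finset (Fin d), F ⊆ G → G ⊆ H → DeltaSet E G α = ∅) :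
    DeltaSet E Fᶜ α = ∅ := by
  rw [← Set.not_nonempty_iff_eq_empty]
  intro hΔ
  rcases F.eq_empty_or_nonempty with rfl | hF
  · exact (deltaSet_empty_nonempty hS hE hα).ne_empty (hempty ∅ subset_rfl H.empty_subset)
  have : Nonempty (Fin d) := ⟨hF.choose⟩
  obtain ⟨i, hi⟩ := H.exists_compl_eq_singleton (by simpa using hH)
  have hH_eq : H = {i}ᶜ := by rw [← hi, compl_compl]
  subst hH_eq
  obtain ⟨G, hFG, hiG, hG⟩ := exists_deltaSet_nonempty_of_deltaSet_compl_nonempty hE hα hF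
    (Finset.subset_compl_singleton.mp hFH) hΔ
  exact hG.ne_empty (hempty G hFG (Finset.subset_compl_singleton.mpr hiG))

theorem stmt_0 {d : ℕ} (hd : 1 ≤ d) (S E : Set (Fin d → ℕ))
    (hS : IsGoodSemigroup S) (hE : IsGoodIdeal S E)
    (α : Fin d → ℕ) (hα : α ∈ E)
    (F H : Finset (Fin d)) (hF : F ⊂ Finset.univ)
    (hH : H.card = d - 1) (hFH : F ⊆ H)
    (hempty : ∀ G : Finset (Fin d), F ⊆ G → G ⊆ H → DeltaSet E G α = ∅) :
    DeltaSet E Fᶜ α = ∅ :=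
  stmt_0_general S E hS hE α hα F H hH hFH hempty
end

section
/- Let S ⊆ ℕ^d be a good semigroup, E ⊆ S a good ideal, α ∈ E and F ⊊ I. If β ∈ Δ^E_F(α) and β is consecutive to α in E, then Δ^E_H(α) = ∅ for every set H with F ⊊ H ⊊ I. -/
/-! If `γ ∈ Δ^E_H(α)` with `F ⊊ H ⊊ I`, then `β ⊓ γ ∈ E` lies between `α` and `β`. It differs
from `α` at a coordinate outside `H`, where both `β` and `γ` exceed `α`, and from `β` at a
coordinate of `H \ F`, where `γ` agrees with `α` but `β` exceeds it. This contradicts the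
consecutiveness of `α` and `β`. -/

lemma le_of_mem_DeltaSet {d : ℕ} {E : Set (Fin d → ℕ)} {H : Finset (Fin d)}
    {α γ : Fin d → ℕ} (hγ : γ ∈ DeltaSet E H α) : α ≤ γ := by
  intro i
  by_cases hi : i ∈ H
  · exact (hγ.2.1 i hi).ge
  · exact (hγ.2.2 i hi).le

lemma DeltaSet_eq_empty_of_consecutiveIn {d : ℕ} {E : Set (Fin d → ℕ)}
    (hinf : ∀ a ∈ E, ∀ b ∈ E, a ⊓ b ∈ E) {α β : Fin d → ℕ} {F H : Finset (Fin d)}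
    (hβ : β ∈ DeltaSet E F α) (hcons : ConsecutiveIn E α β)
    (hFH : F ⊂ H) (hH : H ⊂ Finset.univ) : DeltaSet E H α = ∅ := by
  refine Set.eq_empty_of_forall_notMem fun γ hγ => ?_
  obtain ⟨-, -, hαβ, hbetween⟩ := hcons
  obtain ⟨j, hjH, hjF⟩ := Finset.exists_of_ssubset hFH
  obtain ⟨k, -, hkH⟩ := Finset.exists_of_ssubset hH
  have hkF : k ∉ F := fun hk => hkH (hFH.subset hk)
  have hαδ : α ≤ β ⊓ γ := le_inf hαβ (le_of_mem_DeltaSet hγ)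
  rcases hbetween _ (hinf β hβ.1 γ hγ.1) hαδ inf_le_left with h | h
  · have hk : α k < (β ⊓ γ) k := lt_inf_iff.mpr ⟨hβ.2.2 k hkF, hγ.2.2 k hkH⟩
    rw [h] at hk
    exact lt_irrefl _ hk
  · have hj : (β ⊓ γ) j ≤ α j := (inf_le_right (a := β j)).trans (hγ.2.1 j hjH).le
    rw [h] at hj
    exact absurd (hβ.2.2 j hjF) hj.not_gt

theorem stmt_2_general {d : ℕ} (S E : Set (Fin d → ℕ))
    (hE : IsGoodIdeal S E)
    (α : Fin d → ℕ)
    (F : Finset (Fin d))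
    (β : Fin d → ℕ) (hβ : β ∈ DeltaSet E F α)
    (hcons : ConsecutiveIn E α β) :
    ∀ H : Finset (Fin d), F ⊂ H → H ⊂ Finset.univ → DeltaSet E H α = ∅ :=
  fun _ hFH hH => DeltaSet_eq_empty_of_consecutiveIn hE.2.2.2.1 hβ hcons hFH hH

theorem stmt_2 {d : ℕ} (hd : 1 ≤ d) (S E : Set (Fin d → ℕ))
    (hS : IsGoodSemigroup S) (hE : IsGoodIdeal S E)
    (α : Fin d → ℕ) (hα : α ∈ E)
    (F : Finset (Fin d)) (hF : F ⊂ Finset.univ)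
    (β : Fin d → ℕ) (hβ : β ∈ DeltaSet E F α)
    (hcons : ConsecutiveIn E α β) :
    ∀ H : Finset (Fin d), F ⊂ H → H ⊂ Finset.univ → DeltaSet E H α = ∅ :=
  stmt_2_general S E hE α F β hβ hcons
end

section
/- Let S ⊆ ℕ^d be a good semigroup, E ⊆ S a good ideal, α ∈ E and F ⊆ I. If Δ^E_F(α) = ∅ and F = G₁ ∪ G₂, then either Δ^E_{G₁}(α) = ∅ or Δ^E_{G₂}(α) = ∅. -/
theorem DeltaSet.le_of_mem {d : ℕ} {E : Set (Fin d → ℕ)} {G : Finset (Fin d)}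
    {α β : Fin d → ℕ} (hβ : β ∈ DeltaSet E G α) : α ≤ β := fun i => by
  by_cases hi : i ∈ G
  · exact (hβ.2.1 i hi).ge
  · exact (hβ.2.2 i hi).le

theorem DeltaSet.inf_mem_union {d : ℕ} {E : Set (Fin d → ℕ)}
    (hE : ∀ β ∈ E, ∀ γ ∈ E, β ⊓ γ ∈ E) {G₁ G₂ : Finset (Fin d)} {α β γ : Fin d → ℕ}
    (hβ : β ∈ DeltaSet E G₁ α) (hγ : γ ∈ DeltaSet E G₂ α) :
    β ⊓ γ ∈ DeltaSet E (G₁ ∪ G₂) α := by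
  have hαβ := DeltaSet.le_of_mem hβ
  have hαγ := DeltaSet.le_of_mem hγ
  refine ⟨hE β hβ.1 γ hγ.1, fun i hi => ?_, fun j hj => ?_⟩
  · rcases Finset.mem_union.mp hi with hi | hi
    · exact (inf_eq_left.mpr ((hβ.2.1 i hi).trans_le (hαγ i))).trans (hβ.2.1 i hi)
    · exact (inf_eq_right.mpr ((hγ.2.1 i hi).trans_le (hαβ i))).trans (hγ.2.1 i hi)
  · rw [Finset.mem_union, not_or] at hj
    exact lt_min (hβ.2.2 j hj.1) (hγ.2.2 j hj.2)

theorem stmt_3_general {d : ℕ} (S E : Set (Fin d → ℕ))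
    (hE : IsGoodIdeal S E)
    (α : Fin d → ℕ)
    (F G₁ G₂ : Finset (Fin d)) (hFempty : DeltaSet E F α = ∅)
    (hFdec : F = G₁ ∪ G₂) :
    DeltaSet E G₁ α = ∅ ∨ DeltaSet E G₂ α = ∅ := by
  by_contra h
  obtain ⟨⟨β, hβ⟩, ⟨γ, hγ⟩⟩ : (DeltaSet E G₁ α).Nonempty ∧ (DeltaSet E G₂ α).Nonempty := by
    simpa only [not_or, ← Set.nonempty_iff_ne_empty] using h
  have hmem := DeltaSet.inf_mem_union hE.2.2.2.1 hβ hγ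
  rw [← hFdec, hFempty] at hmem
  exact hmem

theorem stmt_3 {d : ℕ} (hd : 1 ≤ d) (S E : Set (Fin d → ℕ))
    (hS : IsGoodSemigroup S) (hE : IsGoodIdeal S E)
    (α : Fin d → ℕ) (hα : α ∈ E)
    (F G₁ G₂ : Finset (Fin d)) (hFempty : DeltaSet E F α = ∅)
    (hFdec : F = G₁ ∪ G₂) :
    DeltaSet E G₁ α = ∅ ∨ DeltaSet E G₂ α = ∅ :=
  stmt_3_general S E hE α F G₁ G₂ hFempty hFdec
end

section
/- Let S ⊆ ℕ^d be a good semigroup, E ⊆ S a good ideal, α ∈ E, and let F ⊊ I be such that Δ^E_F(α) ≠ ∅ and Δ^E_H(α) = ∅ for every H with F ⊊ H ⊊ I (F is maximal among proper subsets of I with Δ^E_F(α) ≠ ∅). Then for every H ⊆ I, if Δ^E_H(α) ≠ ∅ then either H ⊆ F or H ⊇ F̂. -/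
namespace DeltaSet

variable {d : ℕ} {E : Set (Fin d → ℕ)} {F H : Finset (Fin d)} {α β γ : Fin d → ℕ}

theorem le_of_mem_s4 (hβ : β ∈ DeltaSet E F α) : α ≤ β := fun i => by
  by_cases hi : i ∈ F
  · exact (hβ.2.1 i hi).ge
  · exact (hβ.2.2 i hi).le

theorem inf_mem_union_s4 (hE : ∀ β ∈ E, ∀ γ ∈ E, β ⊓ γ ∈ E)
    (hβ : β ∈ DeltaSet E F α) (hγ : γ ∈ DeltaSet E H α) :
    β ⊓ γ ∈ DeltaSet E (F ∪ H) α := by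
  refine ⟨hE β hβ.1 γ hγ.1, fun i hi => ?_, fun j hj => ?_⟩
  · rcases Finset.mem_union.1 hi with hiF | hiH
    · rw [Pi.inf_apply, hβ.2.1 i hiF]
      exact inf_eq_left.2 (le_of_mem_s4 hγ i)
    · rw [Pi.inf_apply, hγ.2.1 i hiH]
      exact inf_eq_right.2 (le_of_mem_s4 hβ i)
  · rw [Finset.mem_union, not_or] at hj
    exact lt_inf_iff.2 ⟨hβ.2.2 j hj.1, hγ.2.2 j hj.2⟩

end DeltaSet

theorem stmt_4_general {d : ℕ} (S E : Set (Fin d → ℕ))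
    (hE : IsGoodIdeal S E)
    (α : Fin d → ℕ)
    (F : Finset (Fin d))
    (hFne : (DeltaSet E F α).Nonempty)
    (hmax : ∀ H : Finset (Fin d), F ⊂ H → H ⊂ Finset.univ → DeltaSet E H α = ∅) :
    ∀ H : Finset (Fin d), (DeltaSet E H α).Nonempty → H ⊆ F ∨ Fᶜ ⊆ H := by
  intro H ⟨γ, hγ⟩
  refine or_iff_not_imp_left.2 fun hHF => ?_
  obtain ⟨β, hβ⟩ := hFne
  have hinf : β ⊓ γ ∈ DeltaSet E (F ∪ H) α := DeltaSet.inf_mem_union_s4 hE.2.2.2.1 hβ hγ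
  have hunion : F ∪ H = Finset.univ := by
    by_contra hne
    rw [hmax (F ∪ H) (left_lt_sup.2 hHF) (Finset.ssubset_univ_iff.2 hne)] at hinf
    exact hinf
  exact codisjoint_iff_compl_le_right.1 (codisjoint_iff.2 hunion)

theorem stmt_4 {d : ℕ} (hd : 1 ≤ d) (S E : Set (Fin d → ℕ))
    (hS : IsGoodSemigroup S) (hE : IsGoodIdeal S E)
    (α : Fin d → ℕ) (hα : α ∈ E)
    (F : Finset (Fin d)) (hF : F ⊂ Finset.univ)
    (hFne : (DeltaSet E F α).Nonempty)
    (hmax : ∀ H : Finset (Fin d), F ⊂ H → H ⊂ Finset.univ → DeltaSet E H α = ∅) :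
    ∀ H : Finset (Fin d), (DeltaSet E H α).Nonempty → H ⊆ F ∨ Fᶜ ⊆ H :=
  stmt_4_general S E hE α F hFne hmax
end

section
/- Let S ⊆ ℕ^d be a good semigroup, E ⊆ S a good ideal, α ∈ E, F ⊊ I nonempty, and suppose β ∈ Δ^E_F(α). Then there exist r with 1 ≤ r ≤ |F|, elements β^(1),…,β^(r) ∈ E, and sets G₁,…,G_r ⊆ I with G_i ⊇ F̂ for every i and G₁ ∩ ⋯ ∩ G_r = F̂, such that β^(i) ∈ Δ^E_{G_i}(α) for every i and α is the complete infimum in E of β, β^(1), …, β^(r), i.e. α = β ∧̃ β^(1) ∧̃ ⋯ ∧̃ β^(r). -/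
/- For `i ∈ F` call `G ⊇ Fᶜ` separating when some `ε ∈ Δ^E_G(α)` exists with `i ∉ G`. Axiom (G2),
applied to `α` and `β`, shows separating sets exist; (G1) makes them closed under union, so there is
a largest one `G(i)`. A second use of (G2), now on `β` and a witness for `G(x)`, shows that
`x ∉ G(i)` forces `i ∉ G(x)`; hence `G(x) = G(i)`, so distinct sets `G(i)` have union `I`, and the
distinct `G(i)` together with `β` exhibit `α` as a complete infimum. -/

open Finset

variable {d : ℕ}

def HasG2 (E : Set (Fin d → ℕ)) : Prop :=
  ∀ α ∈ E, ∀ β ∈ E, α ≠ β → ∀ i : Fin d, α i = β i →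
    ∃ ε ∈ E, α i < ε i ∧ ∀ j : Fin d, j ≠ i →
      min (α j) (β j) ≤ ε j ∧ (α j ≠ β j → ε j = min (α j) (β j))

section DeltaSet

variable {A B : Set (Fin d → ℕ)} {G H : Finset (Fin d)} {α a b : Fin d → ℕ}

lemma le_of_mem_deltaSet (ha : a ∈ DeltaSet A G α) : α ≤ a := fun l => by
  by_cases hl : l ∈ G
  · exact (ha.2.1 l hl).ge
  · exact (ha.2.2 l hl).le

lemma deltaSet_mono (hAB : A ⊆ B) : DeltaSet A G α ⊆ DeltaSet B G α :=
  fun _ ha => ⟨hAB ha.1, ha.2⟩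

lemma mem_deltaSet_filter_eq_s5 (ha : a ∈ A) (hαa : α ≤ a) :
    a ∈ DeltaSet A (univ.filter fun l => a l = α l) α := by
  refine ⟨ha, fun l hl => (mem_filter.1 hl).2, fun l hl => ?_⟩
  simp only [mem_filter, mem_univ, true_and] at hl
  exact lt_of_le_of_ne (hαa l) (Ne.symm hl)

lemma inf_apply_eq_iff_of_mem_deltaSet (ha : a ∈ DeltaSet A G α) (hb : b ∈ DeltaSet B H α)
    (l : Fin d) : (a ⊓ b) l = α l ↔ l ∈ G ∪ H := by
  have hal := le_of_mem_deltaSet ha l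
  have hbl := le_of_mem_deltaSet hb l
  by_cases hlG : l ∈ G
  · simp [hlG, ha.2.1 l hlG, hbl]
  by_cases hlH : l ∈ H
  · simp [hlH, hb.2.1 l hlH, hal]
  have := ha.2.2 l hlG
  have := hb.2.2 l hlH
  simp only [Pi.inf_apply, mem_union, hlG, hlH, or_self, iff_false]
  omega

lemma inf_mem_deltaSet_union (hA : InfClosed A) (ha : a ∈ DeltaSet A G α)
    (hb : b ∈ DeltaSet A H α) : a ⊓ b ∈ DeltaSet A (G ∪ H) α := by
  refine ⟨hA ha.1 hb.1, fun l hl => (inf_apply_eq_iff_of_mem_deltaSet ha hb l).2 hl,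
    fun l hl => lt_of_le_of_ne (le_inf (le_of_mem_deltaSet ha) (le_of_mem_deltaSet hb) l) ?_⟩
  exact fun h => hl ((inf_apply_eq_iff_of_mem_deltaSet ha hb l).1 h.symm)

lemma inf_eq_of_mem_deltaSet (ha : a ∈ DeltaSet A G α) (hb : b ∈ DeltaSet B H α)
    (hGH : G ∪ H = univ) : a ⊓ b = α :=
  funext fun l => (inf_apply_eq_iff_of_mem_deltaSet ha hb l).2 (hGH ▸ mem_univ l)

end DeltaSet

lemma HasG2.exists_deltaSet {E : Set (Fin d → ℕ)} (hE : HasG2 E) {α γ η : Fin d → ℕ}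
    (hγ : γ ∈ E) (hη : η ∈ E) (hne : γ ≠ η) (hinf : γ ⊓ η = α) {i : Fin d} (hi : γ i = η i) :
    ∃ G : Finset (Fin d), i ∉ G ∧ (∀ j, γ j ≠ η j → j ∈ G) ∧ (DeltaSet E G α).Nonempty := by
  obtain ⟨ε, hε, hεi, hεj⟩ := hE γ hγ η hη hne i hi
  have hmin : ∀ j, min (γ j) (η j) = α j := fun j => congrFun hinf j
  have hαi : α i = γ i := by rw [← hmin i, hi, min_self]
  have hαε : α ≤ ε := fun j => by
    rcases eq_or_ne j i with rfl | hj
    · exact hαi ▸ hεi.le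
    · exact hmin j ▸ (hεj j hj).1
  refine ⟨univ.filter fun l => ε l = α l, ?_, fun j hj => ?_, ε, mem_deltaSet_filter_eq_s5 hε hαε⟩
  · simp only [mem_filter, mem_univ, true_and]
    omega
  · have hji : j ≠ i := fun h => hj (h ▸ hi)
    simp only [mem_filter, mem_univ, true_and]
    rw [(hεj j hji).2 hj, hmin]

section Separating

variable {E : Set (Fin d → ℕ)} {α β : Fin d → ℕ} {F G : Finset (Fin d)} {i x : Fin d}

def IsSeparating (E : Set (Fin d → ℕ)) (α : Fin d → ℕ) (F : Finset (Fin d)) (i : Fin d)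
    (G : Finset (Fin d)) : Prop :=
  Fᶜ ⊆ G ∧ i ∉ G ∧ (DeltaSet E G α).Nonempty

lemma IsSeparating.mem (h : IsSeparating E α F i G) : i ∈ F := by
  by_contra hi
  exact h.2.1 (h.1 (mem_compl.2 hi))

lemma supClosed_isSeparating (hE : InfClosed E) : SupClosed {G | IsSeparating E α F i G} := by
  rintro G ⟨hFG, hiG, a, ha⟩ H ⟨-, hiH, b, hb⟩
  exact ⟨hFG.trans subset_union_left, by simp [sup_eq_union, hiG, hiH],
    a ⊓ b, inf_mem_deltaSet_union hE ha hb⟩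

lemma exists_isSeparating (hE : HasG2 E) (hα : α ∈ E) (hβ : β ∈ DeltaSet E F α)
    (hF : F ≠ univ) (hi : i ∈ F) : ∃ G, IsSeparating E α F i G := by
  obtain ⟨m, hm⟩ : ∃ m, m ∉ F := by simpa [eq_univ_iff_forall] using hF
  have hαβ : α ≠ β := fun h => (hβ.2.2 m hm).ne (congrFun h m)
  obtain ⟨G, hiG, hdiff, hG⟩ := hE.exists_deltaSet hα hβ.1 hαβ
    (inf_eq_left.2 (le_of_mem_deltaSet hβ)) (hβ.2.1 i hi).symm
  exact ⟨G, fun j hj => hdiff j (hβ.2.2 j (mem_compl.1 hj)).ne, hiG, hG⟩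

open Classical in
noncomputable def maxSeparating (E : Set (Fin d → ℕ)) (α : Fin d → ℕ) (F : Finset (Fin d))
    (i : Fin d) : Finset (Fin d) :=
  (univ.filter (IsSeparating E α F i)).sup id

lemma subset_maxSeparating (h : IsSeparating E α F i G) : G ⊆ maxSeparating E α F i := by
  classical
  exact le_sup (f := id) (mem_filter.2 ⟨mem_univ G, h⟩)

lemma isSeparating_maxSeparating (hE : InfClosed E) (h : ∃ G, IsSeparating E α F i G) :
    IsSeparating E α F i (maxSeparating E α F i) := by
  classical
  obtain ⟨G, hG⟩ := h
  exact (supClosed_isSeparating hE).finsetSup_mem ⟨G, mem_filter.2 ⟨mem_univ G, hG⟩⟩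
    fun H hH => (mem_filter.1 hH).2

lemma notMem_maxSeparating_symm (hE : HasG2 E) (hβ : β ∈ DeltaSet E F α)
    (hi : IsSeparating E α F i (maxSeparating E α F i))
    (hx : IsSeparating E α F x (maxSeparating E α F x))
    (hxi : x ∉ maxSeparating E α F i) : i ∉ maxSeparating E α F x := by
  intro hiGx
  have hxF := hx.mem
  obtain ⟨hFGx, hxGx, η, hη⟩ := hx
  have hβη_x : β x < η x := (hβ.2.1 x hxF).symm ▸ hη.2.2 x hxGx
  have hηF : ∀ j ∉ F, η j < β j := fun j hj => (hη.2.1 j (hFGx (mem_compl.2 hj))) ▸ hβ.2.2 j hj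
  have hinf : β ⊓ η = α :=
    inf_eq_of_mem_deltaSet hβ hη (codisjoint_iff.1 (codisjoint_iff_compl_le_right.2 hFGx))
  obtain ⟨G', hiG', hdiff, hG'⟩ := hE.exists_deltaSet hβ.1 hη.1
    (fun h => hβη_x.ne (congrFun h x)) hinf ((hβ.2.1 i hi.mem).trans (hη.2.1 i hiGx).symm)
  have hsep : IsSeparating E α F i G' :=
    ⟨fun j hj => hdiff j (hηF j (mem_compl.1 hj)).ne', hiG', hG'⟩
  exact hxi (subset_maxSeparating hsep (hdiff x hβη_x.ne))

lemma maxSeparating_eq_of_notMem (hE : HasG2 E) (hβ : β ∈ DeltaSet E F α)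
    (hi : IsSeparating E α F i (maxSeparating E α F i))
    (hx : IsSeparating E α F x (maxSeparating E α F x))
    (hxi : x ∉ maxSeparating E α F i) : maxSeparating E α F x = maxSeparating E α F i :=
  Subset.antisymm
    (subset_maxSeparating ⟨hx.1, notMem_maxSeparating_symm hE hβ hi hx hxi, hx.2.2⟩)
    (subset_maxSeparating ⟨hi.1, hxi, hi.2.2⟩)

lemma maxSeparating_union_eq_univ (hE : HasG2 E) (hβ : β ∈ DeltaSet E F α)
    (hsep : ∀ i ∈ F, IsSeparating E α F i (maxSeparating E α F i)) {k : Fin d}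
    (hi : i ∈ F) (hk : k ∈ F) (hne : maxSeparating E α F i ≠ maxSeparating E α F k) :
    maxSeparating E α F i ∪ maxSeparating E α F k = univ := by
  refine eq_univ_of_forall fun x => ?_
  by_contra hx
  simp only [mem_union, not_or] at hx
  have hxF : x ∈ F := by
    by_contra h
    exact hx.1 ((hsep i hi).1 (mem_compl.2 h))
  exact hne <| (maxSeparating_eq_of_notMem hE hβ (hsep i hi) (hsep x hxF) hx.1).symm.trans
    (maxSeparating_eq_of_notMem hE hβ (hsep k hk) (hsep x hxF) hx.2)

end Separating

lemma Finset.exists_fin_section_image {ι κ : Type*} [DecidableEq κ] (F : Finset ι) (G : ι → κ) :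
    ∃ c : Fin (F.image G).card → ι, (∀ j, c j ∈ F) ∧ Function.Injective (G ∘ c) ∧
      ∀ i ∈ F, ∃ j, G (c j) = G i := by
  let e := (F.image G).equivFin
  choose c hcF hc using fun j => mem_image.1 (e.symm j).2
  refine ⟨c, hcF, fun j k h => e.symm.injective (Subtype.ext ?_), fun i hi => ?_⟩
  · exact (hc j).symm.trans (h.trans (hc k))
  · refine ⟨e ⟨G i, mem_image_of_mem G hi⟩, ?_⟩
    rw [hc, Equiv.symm_apply_apply]

section CompleteInf

variable {S A : Set (Fin d → ℕ)} {α : Fin d → ℕ}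

lemma isCompleteInfIn_of_union_eq_univ {n : ℕ} {b : Fin n → Fin d → ℕ}
    {G : Fin n → Finset (Fin d)} (hn : 2 ≤ n) (hAS : A ⊆ S) (hα : α ∈ A)
    (hb : ∀ j, b j ∈ DeltaSet A (G j) α) (hG : ∀ j, (G j).Nonempty ∧ G j ≠ univ)
    (hGG : Pairwise fun j k => G j ∪ G k = univ) (hcover : ∀ x, ∃ j, x ∉ G j) :
    IsCompleteInfIn S A α b :=
  ⟨hα, fun j => (hb j).1, hn, G, hG, fun j => deltaSet_mono hAS (hb j),
    fun j k hjk => (inf_eq_of_mem_deltaSet (hb j) (hb k) (hGG hjk)).symm, hcover⟩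

lemma isCompleteInfIn_cons {β : Fin d → ℕ} {F : Finset (Fin d)} {r : ℕ}
    {βs : Fin r → Fin d → ℕ} {G : Fin r → Finset (Fin d)} (hr : 1 ≤ r) (hAS : A ⊆ S)
    (hα : α ∈ A) (hβ : β ∈ DeltaSet A F α) (hβs : ∀ j, βs j ∈ DeltaSet A (G j) α)
    (hFne : F.Nonempty) (hF : F ≠ univ) (hFG : ∀ j, Fᶜ ⊆ G j) (hG : ∀ j, G j ≠ univ)
    (hGG : Pairwise fun j k => G j ∪ G k = univ) (hcover : ∀ x ∈ F, ∃ j, x ∉ G j) :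
    IsCompleteInfIn S A α (Fin.cons β βs : Fin (r + 1) → Fin d → ℕ) := by
  have hFG' : ∀ j, F ∪ G j = univ := fun j =>
    codisjoint_iff.1 (codisjoint_iff_compl_le_right.2 (hFG j))
  refine isCompleteInfIn_of_union_eq_univ (G := Fin.cons F G) (by omega) hAS hα ?_ ?_ ?_ ?_
  · exact Fin.cases hβ hβs
  · refine Fin.cases ⟨hFne, hF⟩ fun j => ⟨?_, hG j⟩
    obtain ⟨m, hm⟩ : ∃ m, m ∉ F := by simpa [eq_univ_iff_forall] using hF
    exact ⟨m, hFG j (mem_compl.2 hm)⟩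
  · intro j k hjk
    cases j using Fin.cases <;> cases k using Fin.cases
    · exact absurd rfl hjk
    · simpa using hFG' _
    · simpa [union_comm] using hFG' _
    · simpa using hGG fun h => hjk (congrArg Fin.succ h)
  · intro x
    by_cases hx : x ∈ F
    · obtain ⟨j, hj⟩ := hcover x hx
      exact ⟨j.succ, by simpa using hj⟩
    · exact ⟨0, by simpa using hx⟩

end CompleteInf

theorem stmt_5_general {d : ℕ} (S E : Set (Fin d → ℕ))
    (hE : IsGoodIdeal S E)
    (α : Fin d → ℕ) (hα : α ∈ E)
    (F : Finset (Fin d)) (hFne : F.Nonempty) (hF : F ⊂ Finset.univ)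
    (β : Fin d → ℕ) (hβ : β ∈ DeltaSet E F α) :
    ∃ r : ℕ, 1 ≤ r ∧ r ≤ F.card ∧
      ∃ (βs : Fin r → Fin d → ℕ) (G : Fin r → Finset (Fin d)),
        (∀ i, Fᶜ ⊆ G i) ∧
        (∀ x : Fin d, (∀ i, x ∈ G i) ↔ x ∈ Fᶜ) ∧
        (∀ i, βs i ∈ DeltaSet E (G i) α) ∧
        IsCompleteInfIn S E α (Fin.cons β βs) := by
  obtain ⟨hES, -, -, hEinf, hEG2⟩ := hE
  set G := maxSeparating E α F
  have hsep : ∀ i ∈ F, IsSeparating E α F i (G i) := fun i hi =>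
    isSeparating_maxSeparating (fun a ha b hb => hEinf a ha b hb)
      (exists_isSeparating hEG2 hα hβ hF.ne hi)
  obtain ⟨c, hcF, hcinj, hcsurj⟩ := F.exists_fin_section_image G
  have hsepc : ∀ j, IsSeparating E α F (c j) (G (c j)) := fun j => hsep (c j) (hcF j)
  choose βs hβs using fun j => (hsepc j).2.2
  have hcover : ∀ x ∈ F, ∃ j, x ∉ G (c j) := fun x hx =>
    (hcsurj x hx).imp fun j (hj : G (c j) = G x) => hj ▸ (hsep x hx).2.1
  have hr : 1 ≤ (F.image G).card := card_pos.2 (hFne.image G)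
  refine ⟨_, hr, card_image_le, βs, G ∘ c, fun j => (hsepc j).1,
    fun x => ⟨fun h => ?_, fun hx j => (hsepc j).1 hx⟩, hβs, ?_⟩
  · exact mem_compl.2 fun hx => (hcover x hx).elim fun j hj => hj (h j)
  · exact isCompleteInfIn_cons hr hES hα hβ hβs hFne hF.ne (fun j => (hsepc j).1)
      (fun j h => (hsepc j).2.1 (h ▸ mem_univ _))
      (fun j k hjk => maxSeparating_union_eq_univ hEG2 hβ hsep (hcF j) (hcF k) (hcinj.ne hjk))
      hcover

theorem stmt_5 {d : ℕ} (hd : 1 ≤ d) (S E : Set (Fin d → ℕ))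
    (hS : IsGoodSemigroup S) (hE : IsGoodIdeal S E)
    (α : Fin d → ℕ) (hα : α ∈ E)
    (F : Finset (Fin d)) (hFne : F.Nonempty) (hF : F ⊂ Finset.univ)
    (β : Fin d → ℕ) (hβ : β ∈ DeltaSet E F α) :
    ∃ r : ℕ, 1 ≤ r ∧ r ≤ F.card ∧
      ∃ (βs : Fin r → Fin d → ℕ) (G : Fin r → Finset (Fin d)),
        (∀ i, Fᶜ ⊆ G i) ∧
        (∀ x : Fin d, (∀ i, x ∈ G i) ↔ x ∈ Fᶜ) ∧
        (∀ i, βs i ∈ DeltaSet E (G i) α) ∧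
        IsCompleteInfIn S E α (Fin.cons β βs) :=
  stmt_5_general S E hE α hα F hFne hF β hβ
end

section
/- Let S ⊆ ℕ^d be a good semigroup, E ⊆ S a good ideal with conductor c_E, α ∈ ℕ^d, and suppose c_E ∈ Δ^E_F(α) for some nonempty F ⊊ I (i.e. (c_E)_i = α_i for all i ∈ F and (c_E)_j > α_j for all j ∉ F). Then the following are equivalent: (1) α ∈ E; (2) Δ̃_{F̂}(α) ⊆ E (where Δ̃ is taken over ℕ^d); (3) Δ̃^E_{F̂}(α) ≠ ∅. -/
/-! The heart of the proof is a climbing argument: from an element `τ ∈ E` lying strictly below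
the conductor `c` in some coordinate, axiom (G2) applied to `τ` and the element of `c + ℕ^d`
obtained from `τ ⊔ c` by resetting one coordinate `i` with `c i ≤ τ i` back to `τ i` raises
coordinate `i` without moving the coordinates where `τ` is below `c`. Iterating, `E` contains
elements that are arbitrarily large in the coordinates where `τ ≥ c` and agree with `τ`
elsewhere; meeting such an element with a point of `c + ℕ^d` shows that every `β ≥ α ∈ E`
agreeing with `α` where `α < c` lies in `E`. For `cE ∈ Δ^E_F(α)` these are exactly the
elements of `Δ̃_{F̂}(α)`, and conversely `α = β ⊓ cE` for every `β ∈ Δ̃^E_{F̂}(α)`. -/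

section Climbing

variable {d : ℕ} {S E : Set (Fin d → ℕ)} {c : Fin d → ℕ}

theorem IsGoodIdeal.exists_raise_coord (hE : IsGoodIdeal S E) (hc : ∀ x, c ≤ x → x ∈ E)
    {τ : Fin d → ℕ} (hτ : τ ∈ E) {j₀ : Fin d} (hj₀ : τ j₀ < c j₀) {i : Fin d}
    (hi : c i ≤ τ i) :
    ∃ ε ∈ E, τ ≤ ε ∧ τ i < ε i ∧ ∀ j, τ j < c j → ε j = τ j := by
  set μ : Fin d → ℕ := Function.update (τ ⊔ c) i (τ i)
  have hμ_ne : ∀ j ≠ i, μ j = max (τ j) (c j) := fun j hj => Function.update_of_ne hj _ _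
  have hτμ : τ ≤ μ := fun j => by
    rcases eq_or_ne j i with rfl | hj
    · simp [μ]
    · simp [hμ_ne j hj]
  have hμ : μ ∈ E := hc μ fun j => by
    rcases eq_or_ne j i with rfl | hj
    · simpa [μ] using hi
    · simp [hμ_ne j hj]
  have hj₀i : j₀ ≠ i := by rintro rfl; omega
  have hne : τ ≠ μ := fun h => by
    have := congrFun h j₀
    rw [hμ_ne j₀ hj₀i] at this
    omega
  obtain ⟨ε, hε, hεi, hεj⟩ := hE.2.2.2.2 τ hτ μ hμ hne i (by simp [μ])
  have hmin : ∀ j, min (τ j) (μ j) = τ j := fun j => min_eq_left (hτμ j)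
  refine ⟨ε, hε, fun j => ?_, hεi, fun j hj => ?_⟩
  · rcases eq_or_ne j i with rfl | hji
    · exact hεi.le
    · simpa [hmin] using (hεj j hji).1
  · have hji : j ≠ i := by rintro rfl; omega
    have hμj := hμ_ne j hji
    simpa [hmin] using (hεj j hji).2 (by omega)

theorem IsGoodIdeal.exists_ge_on_high (hE : IsGoodIdeal S E) (hc : ∀ x, c ≤ x → x ∈ E)
    (β : Fin d → ℕ) {τ : Fin d → ℕ} (hτ : τ ∈ E) (hlow : ∃ j, τ j < c j) :
    ∃ τ' ∈ E, (∀ j, τ j < c j → τ' j = τ j) ∧ ∀ j, c j ≤ τ j → β j ≤ τ' j := by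
  induction h : ∑ j, (β j - τ j) using Nat.strong_induction_on generalizing τ with
  | _ n ih =>
  by_cases hdone : ∀ j, c j ≤ τ j → β j ≤ τ j
  · exact ⟨τ, hτ, fun _ _ => rfl, hdone⟩
  push Not at hdone
  obtain ⟨i, hci, hβi⟩ := hdone
  obtain ⟨j₀, hj₀⟩ := hlow
  obtain ⟨ε, hε, hτε, hεi, hε_low⟩ := hE.exists_raise_coord hc hτ hj₀ hci
  have hdecr : ∑ j, (β j - ε j) < n := h ▸
    Finset.sum_lt_sum (fun j _ => Nat.sub_le_sub_left (hτε j) _)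
      ⟨i, Finset.mem_univ _, by omega⟩
  obtain ⟨τ', hτ', hτ'_low, hτ'_high⟩ :=
    ih _ hdecr hε ⟨j₀, (hε_low j₀ hj₀).symm ▸ hj₀⟩ rfl
  refine ⟨τ', hτ', fun j hj => ?_, fun j hj => hτ'_high j (hj.trans (hτε j))⟩
  rw [hτ'_low j ((hε_low j hj).symm ▸ hj), hε_low j hj]

theorem IsGoodIdeal.mem_of_le_of_eq_on_low (hE : IsGoodIdeal S E) (hc : ∀ x, c ≤ x → x ∈ E)
    {α β : Fin d → ℕ} (hα : α ∈ E) (hle : α ≤ β) (heq : ∀ j, α j < c j → β j = α j) :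
    β ∈ E := by
  by_cases hlow : ∃ j, α j < c j
  · obtain ⟨τ', hτ', hτ'_low, hτ'_high⟩ := hE.exists_ge_on_high hc β hα hlow
    have hβ : β = τ' ⊓ (β ⊔ c) := funext fun j => by
      have hj : α j ≤ β j := hle j
      simp only [Pi.inf_apply, Pi.sup_apply]
      rcases lt_or_ge (α j) (c j) with h | h
      · have := heq j h; have := hτ'_low j h; omega
      · have := hτ'_high j h; omega
    rw [hβ]
    exact hE.2.2.2.1 _ hτ' _ (hc _ le_sup_right)
  · push Not at hlow
    exact hc β (le_trans hlow hle)

end Climbing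

theorem le_of_mem_deltaTilde {d : ℕ} {E : Set (Fin d → ℕ)} {G : Finset (Fin d)}
    {α β : Fin d → ℕ} (h : β ∈ DeltaTilde E G α) : α ≤ β := fun j => by
  by_cases hj : j ∈ G
  · exact (h.1.2.1 j hj).ge
  · exact h.1.2.2 j hj

theorem stmt_6_general {d : ℕ} (S E : Set (Fin d → ℕ))
    (hE : IsGoodIdeal S E)
    (cE : Fin d → ℕ) (hcE : IsConductor E cE)
    (α : Fin d → ℕ)
    (F : Finset (Fin d)) (hFne : F.Nonempty)
    (hc : cE ∈ DeltaSet E F α) :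
    (α ∈ E ↔ DeltaTilde (Set.univ : Set (Fin d → ℕ)) Fᶜ α ⊆ E) ∧
    (α ∈ E ↔ (DeltaTilde E Fᶜ α).Nonempty) := by
  obtain ⟨hcE_mem, hcF, hcFc⟩ := hc
  have h12 : α ∈ E → DeltaTilde Set.univ Fᶜ α ⊆ E := fun hα β hβ =>
    hE.mem_of_le_of_eq_on_low hcE.1 hα (le_of_mem_deltaTilde hβ) fun j hj =>
      hβ.1.2.1 j (Finset.mem_compl.2 fun hjF => by rw [hcF j hjF] at hj; exact hj.false)
  have h23 : DeltaTilde Set.univ Fᶜ α ⊆ E → (DeltaTilde E Fᶜ α).Nonempty := fun h2 => by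
    obtain ⟨i₀, hi₀⟩ := hFne
    have hβ : α + Pi.single i₀ 1 ∈ DeltaTilde Set.univ Fᶜ α :=
      ⟨⟨trivial, fun j hj => by
          simp [Pi.single_eq_of_ne (ne_of_mem_of_not_mem hi₀ (Finset.mem_compl.1 hj)).symm],
        fun j _ => le_self_add⟩,
       fun h => by simpa using congrFun h i₀⟩
    exact ⟨_, ⟨h2 hβ, hβ.1.2⟩, hβ.2⟩
  have h31 : (DeltaTilde E Fᶜ α).Nonempty → α ∈ E := fun ⟨β, hβ⟩ => by
    have hαβ := le_of_mem_deltaTilde hβ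
    have hα : α = β ⊓ cE := funext fun j => by
      by_cases hj : j ∈ F
      · simpa [hcF j hj] using hαβ j
      · simpa [hβ.1.2.1 j (Finset.mem_compl.2 hj)] using (hcFc j hj).le
    exact hα ▸ hE.2.2.2.1 β hβ.1.1 cE hcE_mem
  exact ⟨⟨h12, h31 ∘ h23⟩, ⟨h23 ∘ h12, h31⟩⟩

theorem stmt_6 {d : ℕ} (hd : 1 ≤ d) (S E : Set (Fin d → ℕ))
    (hS : IsGoodSemigroup S) (hE : IsGoodIdeal S E)
    (cE : Fin d → ℕ) (hcE : IsConductor E cE)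
    (α : Fin d → ℕ)
    (F : Finset (Fin d)) (hFne : F.Nonempty) (hF : F ⊂ Finset.univ)
    (hc : cE ∈ DeltaSet E F α) :
    (α ∈ E ↔ DeltaTilde (Set.univ : Set (Fin d → ℕ)) Fᶜ α ⊆ E) ∧
    (α ∈ E ↔ (DeltaTilde E Fᶜ α).Nonempty) :=
  stmt_6_general S E hE cE hcE α F hFne hc
end

section
/- Let S ⊆ ℕ^d be a good semigroup, E ⊆ S a nonempty proper good ideal with conductor c_E, A = S \ E with levels A₁,…,A_N. Let α ∈ ℕ^d be such that c_E ∈ Δ^E_F(α) for some nonempty F ⊊ I. Then for every i ∈ {1,…,N} the following are equivalent: (1) α ∈ A_i; (2) Δ̃_{F̂}(α) ⊆ A_i (where Δ̃ is taken over ℕ^d); (3) Δ̃_{F̂}(α) contains some element of A_i. -/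
/-!
Let `c` be the conductor of `E`. Call `a` and `b` equivalent if they agree off `F` and both
dominate `c` on `F`. Since `c + ℕ^d ⊆ E ⊆ S`, property (G1) lets one lower a coordinate that
stays above `c`, and (G2), applied to `δ` and an element above `c` agreeing with `δ` only at
that coordinate, lets one raise it by one (a coordinate outside `F` witnesses `δ ≠` that element).
Hence `S` and `E` are unions of equivalence classes. Translating the witnesses of maximality and
of complete infima by `b - a` shows, by induction on the construction, that so is every level.
Finally `α = c` on `F`, so `α` is equivalent to every element of `Δ̃_{F̂}(α)`, which is nonempty.
-/

open Function

variable {d : ℕ}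

/-- (G1), (G2) and `c + ℕ^d ⊆ X`: this holds for `X = S` and `X = E` when `c` is the conductor
of `E`. -/
structure IsGoodAbove (X : Set (Fin d → ℕ)) (c : Fin d → ℕ) : Prop where
  inf_mem : ∀ a ∈ X, ∀ b ∈ X, a ⊓ b ∈ X
  exists_of_eq : ∀ a ∈ X, ∀ b ∈ X, a ≠ b → ∀ i : Fin d, a i = b i →
    ∃ ε ∈ X, a i < ε i ∧ ∀ j : Fin d, j ≠ i →
      min (a j) (b j) ≤ ε j ∧ (a j ≠ b j → ε j = min (a j) (b j))
  mem_of_le : ∀ x, c ≤ x → x ∈ X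

lemma IsGoodSemigroup.isGoodAbove {S : Set (Fin d → ℕ)} (hS : IsGoodSemigroup S)
    {c : Fin d → ℕ} (hc : ∀ x, c ≤ x → x ∈ S) : IsGoodAbove S c :=
  ⟨hS.2.2.1, hS.2.2.2.1, hc⟩

lemma IsGoodIdeal.isGoodAbove {S E : Set (Fin d → ℕ)} (hE : IsGoodIdeal S E)
    {c : Fin d → ℕ} (hc : ∀ x, c ≤ x → x ∈ E) : IsGoodAbove E c :=
  ⟨hE.2.2.2.1, hE.2.2.2.2, hc⟩

namespace IsGoodAbove

variable {X : Set (Fin d → ℕ)} {c δ : Fin d → ℕ} {i j : Fin d}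

lemma update_succ_mem (hX : IsGoodAbove X c) (hδ : δ ∈ X) (hji : j ≠ i) (hc : c i ≤ δ i) :
    update δ i (δ i + 1) ∈ X := by
  set x : Fin d → ℕ := update (c ⊔ (δ + 1)) i (δ i) with hx
  have hxX : x ∈ X := hX.mem_of_le x fun k => by
    rcases eq_or_ne k i with rfl | hk <;> simp [*]
  have hδx : δ ≠ x := fun h => by
    have := congrFun h j
    simp only [hx, update_of_ne hji, Pi.sup_apply, Pi.add_apply, Pi.one_apply] at this
    omega
  obtain ⟨ε, hεX, hεi, hε⟩ := hX.exists_of_eq δ hδ x hxX hδx i (by simp [hx])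
  have hγX : update (c ⊔ δ) i (δ i + 1) ∈ X := hX.mem_of_le _ fun k => by
    rcases eq_or_ne k i with rfl | hk
    · simp only [update_self]; omega
    · simp [hk]
  -- `ε` agrees with `δ` off `i`, because `x` differs from `δ` at every coordinate but `i`
  convert hX.inf_mem ε hεX _ hγX using 1
  funext k
  rcases eq_or_ne k i with rfl | hk
  · simp only [update_self, Pi.inf_apply]; omega
  · have := (hε k hk).2 (by
      simp only [hx, update_of_ne hk, Pi.sup_apply, Pi.add_apply, Pi.one_apply]; omega)
    simp only [hx, update_of_ne hk, Pi.inf_apply, Pi.sup_apply, Pi.add_apply, Pi.one_apply]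
      at this ⊢
    omega

lemma update_mem (hX : IsGoodAbove X c) (hδ : δ ∈ X) (hji : j ≠ i) (hc : c i ≤ δ i)
    {m : ℕ} (hm : c i ≤ m) : update δ i m ∈ X := by
  have hraise : ∀ n, update δ i (δ i + n) ∈ X := by
    intro n
    induction n with
    | zero => simpa using hδ
    | succ n ih =>
      simpa [← add_assoc] using hX.update_succ_mem ih hji (by rw [update_self]; omega)
  have hlow : update (c ⊔ δ) i m ∈ X := hX.mem_of_le _ fun k => by
    rcases eq_or_ne k i with rfl | hk <;> simp [*]
  convert hX.inf_mem _ (hraise m) _ hlow using 1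
  funext k
  rcases eq_or_ne k i with rfl | hk
  · simp only [update_self, Pi.inf_apply]; omega
  · simp [hk]

lemma piecewise_mem (hX : IsGoodAbove X c) {a b : Fin d → ℕ} (ha : a ∈ X) {s : Finset (Fin d)}
    (hj : j ∉ s) (hab : ∀ i ∈ s, c i ≤ a i ∧ c i ≤ b i) : s.piecewise b a ∈ X := by
  induction s using Finset.induction_on with
  | empty => simpa using ha
  | insert i s his ih =>
    have hjs : j ∉ s := fun h => hj (Finset.mem_insert_of_mem h)
    have hji : j ≠ i := by rintro rfl; exact hj (Finset.mem_insert_self _ _)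
    obtain ⟨hai, hbi⟩ := hab i (Finset.mem_insert_self _ _)
    rw [Finset.piecewise_insert]
    refine hX.update_mem (ih hjs fun k hk => hab k (Finset.mem_insert_of_mem hk)) hji ?_ hbi
    rwa [Finset.piecewise_eq_of_notMem _ _ _ his]

end IsGoodAbove

def ConductorEquiv (c : Fin d → ℕ) (F : Finset (Fin d)) (a b : Fin d → ℕ) : Prop :=
  (∀ i ∉ F, a i = b i) ∧ ∀ i ∈ F, c i ≤ a i ∧ c i ≤ b i

namespace ConductorEquiv

variable {S E X prev : Set (Fin d → ℕ)} {c a b : Fin d → ℕ} {F : Finset (Fin d)} {j : Fin d}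

lemma symm (h : ConductorEquiv c F a b) : ConductorEquiv c F b a :=
  ⟨fun i hi => (h.1 i hi).symm, fun i hi => (h.2 i hi).symm⟩

lemma add_sub (h : ConductorEquiv c F a b) {x : Fin d → ℕ} (hx : a ≤ x) :
    ConductorEquiv c F x (x + b - a) := by
  refine ⟨fun i hi => ?_, fun i hi => ?_⟩
  · have := h.1 i hi
    simp only [Pi.sub_apply, Pi.add_apply]; omega
  · have := h.2 i hi
    have : a i ≤ x i := hx i
    simp only [Pi.sub_apply, Pi.add_apply]; omega

lemma mem_of_mem (hX : IsGoodAbove X c) (hj : j ∉ F) (h : ConductorEquiv c F a b)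
    (ha : a ∈ X) : b ∈ X := by
  convert hX.piecewise_mem ha hj h.2 using 1
  funext i
  by_cases hi : i ∈ F
  · simp [hi]
  · simp [hi, h.1 i hi]

lemma mem_iff (hX : IsGoodAbove X c) (hj : j ∉ F) (h : ConductorEquiv c F a b) :
    a ∈ X ↔ b ∈ X :=
  ⟨h.mem_of_mem hX hj, h.symm.mem_of_mem hX hj⟩

variable (hS : IsGoodAbove S c) (hE : IsGoodAbove E c) (hj : j ∉ F)
include hS hE hj

section Levels

variable (hprev : ∀ x y, ConductorEquiv c F x y → (x ∈ prev ↔ y ∈ prev))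
include hprev

lemma mem_sdiff_iff (h : ConductorEquiv c F a b) :
    a ∈ (S \ E) \ prev ↔ b ∈ (S \ E) \ prev := by
  simp only [Set.mem_sdiff, h.mem_iff hS hj, h.mem_iff hE hj, hprev a b h]

lemma mem_bstep_of_mem (h : ConductorEquiv c F a b) (ha : a ∈ Bstep S E prev) :
    b ∈ Bstep S E prev := by
  refine ⟨(mem_sdiff_iff hS hE hj hprev h).1 ha.1, fun δ hδ hbδ => ?_⟩
  rcases hbδ with rfl | hlt
  · rfl
  exfalso
  -- translating `δ` by `a - b` would give an element of `A` strictly above the maximal `a`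
  have hδ' := (mem_sdiff_iff hS hE hj hprev (h.symm.add_sub fun i => (hlt i).le)).1 hδ
  have heq := ha.2 _ hδ' (Or.inr fun i => by
    have := hlt i
    simp only [Pi.sub_apply, Pi.add_apply]; omega)
  have := congrFun heq j
  have := hlt j
  simp only [Pi.sub_apply, Pi.add_apply] at *
  omega

lemma mem_bstep_iff (h : ConductorEquiv c F a b) : a ∈ Bstep S E prev ↔ b ∈ Bstep S E prev :=
  ⟨mem_bstep_of_mem hS hE hj hprev h, mem_bstep_of_mem hS hE hj hprev h.symm⟩

lemma mem_cstep_of_mem (h : ConductorEquiv c F a b) (ha : a ∈ Cstep S E prev) :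
    b ∈ Cstep S E prev := by
  obtain ⟨haB, r, hr1, hrd, β, hβB, -, -, h2r, G, hG, hGΔ, hinf, hcover⟩ := ha
  have hle : ∀ k, a ≤ β k := fun k i => by
    by_cases hi : i ∈ G k
    · exact ((hGΔ k).2.1 i hi).ge
    · exact ((hGΔ k).2.2 i hi).le
  have hβ'B : ∀ k, β k + b - a ∈ Bstep S E prev :=
    fun k => (mem_bstep_iff hS hE hj hprev (h.add_sub (hle k))).1 (hβB k)
  have hbB := (mem_bstep_iff hS hE hj hprev h).1 haB
  refine ⟨hbB, r, hr1, hrd, fun k => β k + b - a, hβ'B, hbB.1.1, fun k => (hβ'B k).1.1, h2r, G,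
    hG, fun k => ⟨(hβ'B k).1.1.1, fun i hi => ?_, fun i hi => ?_⟩, fun k l hkl => ?_, hcover⟩
  · have := (hGΔ k).2.1 i hi
    simp only [Pi.sub_apply, Pi.add_apply]; omega
  · have := (hGΔ k).2.2 i hi
    simp only [Pi.sub_apply, Pi.add_apply]; omega
  · funext i
    have := congrFun (hinf k l hkl) i
    have := hle k i
    have := hle l i
    simp only [Pi.inf_apply, Pi.sub_apply, Pi.add_apply] at *
    omega

lemma mem_dstep_iff (h : ConductorEquiv c F a b) : a ∈ Dstep S E prev ↔ b ∈ Dstep S E prev := by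
  simp only [Dstep, Set.mem_sdiff, mem_bstep_iff hS hE hj hprev h]
  exact and_congr_right' (not_congr
    ⟨mem_cstep_of_mem hS hE hj hprev h, mem_cstep_of_mem hS hE hj hprev h.symm⟩)

end Levels

lemma mem_dacc_iff (n : ℕ) :
    ∀ {a b}, ConductorEquiv c F a b → (a ∈ Dacc S E n ↔ b ∈ Dacc S E n) := by
  induction n with
  | zero => simp [Dacc]
  | succ n ih =>
    intro a b h
    simp only [Dacc, Set.mem_union, ih h, mem_dstep_iff hS hE hj (fun _ _ => ih) h]

lemma mem_alevel_iff (N i : ℕ) (h : ConductorEquiv c F a b) :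
    a ∈ Alevel S E N i ↔ b ∈ Alevel S E N i := by
  unfold Alevel
  split_ifs
  · exact mem_dstep_iff hS hE hj (fun _ _ => mem_dacc_iff hS hE hj _) h
  · simp

end ConductorEquiv

lemma Set.iff_subset_and_iff_inter_nonempty {α : Type*} {p : Prop} {s t : Set α}
    (hs : s.Nonempty) (h : ∀ x ∈ s, (p ↔ x ∈ t)) : (p ↔ s ⊆ t) ∧ (p ↔ (s ∩ t).Nonempty) := by
  obtain ⟨x, hx⟩ := hs
  exact ⟨⟨fun hp y hy => (h y hy).1 hp, fun hst => (h x hx).2 (hst hx)⟩,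
    ⟨fun hp => ⟨x, hx, (h x hx).1 hp⟩, fun ⟨y, hy, hyt⟩ => (h y hy).2 hyt⟩⟩

lemma conductorEquiv_of_mem_deltaTilde {c α β : Fin d → ℕ} {F : Finset (Fin d)}
    (hc : ∀ i ∈ F, c i = α i) (hβ : β ∈ DeltaTilde Set.univ Fᶜ α) : ConductorEquiv c F α β := by
  obtain ⟨⟨-, hoff, hon⟩, -⟩ := hβ
  refine ⟨fun i hi => (hoff i (Finset.mem_compl.2 hi)).symm, fun i hi => ?_⟩
  have := hon i (by simpa using hi)
  have := hc i hi
  omega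

lemma deltaTilde_compl_nonempty {α : Fin d → ℕ} {F : Finset (Fin d)} (hF : F.Nonempty) :
    (DeltaTilde Set.univ Fᶜ α).Nonempty := by
  obtain ⟨i, hi⟩ := hF
  refine ⟨F.piecewise (α + 1) α, ⟨Set.mem_univ _, fun k hk => ?_, fun k hk => ?_⟩, fun h => ?_⟩
  · simp [Finset.piecewise_eq_of_notMem _ _ _ (Finset.mem_compl.1 hk)]
  · simp [Finset.piecewise_eq_of_mem _ _ _ (by simpa using hk)]
  · simpa [hi] using congrFun h i

theorem stmt_12_general {d : ℕ} (S E : Set (Fin d → ℕ))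
    (hS : IsGoodSemigroup S) (hE : IsGoodIdeal S E)
    (cE : Fin d → ℕ) (hcE : IsConductor E cE)
    (N : ℕ)
    (α : Fin d → ℕ)
    (F : Finset (Fin d)) (hFne : F.Nonempty) (hF : F ⊂ Finset.univ)
    (hc : cE ∈ DeltaSet E F α) :
    ∀ i : ℕ, 1 ≤ i → i ≤ N →
      ((α ∈ Alevel S E N i ↔
          DeltaTilde (Set.univ : Set (Fin d → ℕ)) Fᶜ α ⊆ Alevel S E N i) ∧
       (α ∈ Alevel S E N i ↔
          (DeltaTilde (Set.univ : Set (Fin d → ℕ)) Fᶜ α ∩ Alevel S E N i).Nonempty)) := by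
  intro i _ _
  have hSc := hS.isGoodAbove fun x hx => hE.1 (hcE.1 x hx)
  have hEc := hE.isGoodAbove hcE.1
  obtain ⟨j, -, hj⟩ := Finset.exists_of_ssubset hF
  exact Set.iff_subset_and_iff_inter_nonempty (deltaTilde_compl_nonempty hFne) fun β hβ =>
    ConductorEquiv.mem_alevel_iff hSc hEc hj N i (conductorEquiv_of_mem_deltaTilde hc.2.1 hβ)

theorem stmt_12 {d : ℕ} (hd : 1 ≤ d) (S E : Set (Fin d → ℕ))
    (hS : IsGoodSemigroup S) (hE : IsGoodIdeal S E) (hprop : E ≠ S)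
    (cE : Fin d → ℕ) (hcE : IsConductor E cE)
    (N : ℕ) (hN : IsLevelsNumber S E N)
    (α : Fin d → ℕ)
    (F : Finset (Fin d)) (hFne : F.Nonempty) (hF : F ⊂ Finset.univ)
    (hc : cE ∈ DeltaSet E F α) :
    ∀ i : ℕ, 1 ≤ i → i ≤ N →
      ((α ∈ Alevel S E N i ↔
          DeltaTilde (Set.univ : Set (Fin d → ℕ)) Fᶜ α ⊆ Alevel S E N i) ∧
       (α ∈ Alevel S E N i ↔
          (DeltaTilde (Set.univ : Set (Fin d → ℕ)) Fᶜ α ∩ Alevel S E N i).Nonempty)) :=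
  stmt_12_general S E hS hE cE hcE N α F hFne hF hc
end

section
/- Let S ⊆ ℕ^d be a good semigroup, E ⊆ S a nonempty proper good ideal with conductor c_E, F ⊊ U ⊆ I with U nonempty, and let α(U) be a U-subspace of E (so α ∈ E and α_j = (c_E)_j for all j ∉ U). Then: (1) for every β ∈ ℕ^d with β_j = (c_E)_j for all j ∉ U, the U-subspace β(U) belongs to Δ^E_F(α(U)) if and only if β ∈ Δ^E_{F ∪ Û}(α), and β(U) belongs to Δ̃^E_F(α(U)) if and only if β ∈ Δ̃^E_{F ∪ Û}(α); (2) for every set G with (U \ F) ⊆ G ⊆ U and every U-subspace β(U) of E, β(U) ∈ Δ̃^E_G(α(U)) if and only if β ∈ Δ̃^E_G(α). -/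
/-! Representatives of `U`-subspaces all equal the conductor off `U`, so any two of them agree
there. Hence a `Δ`-condition on `U`-subspaces, which only constrains the coordinates in `U`, is
the ordinary `Δ`-condition on representatives with equality imposed on `Uᶜ` as well; in the
non-strict `Δ̃`-condition that extra equality is automatic. -/

section SubspaceDelta

variable {d : ℕ} {E : Set (Fin d → ℕ)} {cE α β : Fin d → ℕ} {U F : Finset (Fin d)}

lemma eq_iff_forall_mem_eq_of_forall_notMem_eq (h : ∀ j ∉ U, β j = α j) :
    β = α ↔ ∀ j ∈ U, β j = α j := by
  refine ⟨fun hβα j _ => by rw [hβα], fun hU => funext fun j => ?_⟩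
  by_cases hj : j ∈ U
  · exact hU j hj
  · exact h j hj

lemma forall_mem_union_compl_eq_iff (h : ∀ j ∉ U, β j = α j) :
    (∀ i ∈ F ∪ Uᶜ, β i = α i) ↔ ∀ i ∈ F, β i = α i := by
  simp only [Finset.mem_union, Finset.mem_compl]
  exact ⟨fun hF i hi => hF i (Or.inl hi), fun hF i => Or.rec (hF i) (h i)⟩

lemma forall_notMem_union_compl_iff {p : Fin d → Prop} :
    (∀ j ∉ F ∪ Uᶜ, p j) ↔ ∀ j ∈ U, j ∉ F → p j := by
  simp only [Finset.mem_union, Finset.mem_compl, not_or, not_not]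
  exact ⟨fun h j hU hF => h j ⟨hF, hU⟩, fun h j hj => h j hj.2 hj.1⟩

lemma subDelta_iff_mem_deltaSet (hα : ∀ j ∉ U, α j = cE j) (hβ : ∀ j ∉ U, β j = cE j) :
    SubDelta E cE U F α β ↔ β ∈ DeltaSet E (F ∪ Uᶜ) α := by
  have hβα : ∀ j ∉ U, β j = α j := fun j hj => (hβ j hj).trans (hα j hj).symm
  rw [SubDelta, IsSubspaceRep, DeltaSet, Set.mem_ofPred_eq, forall_mem_union_compl_eq_iff hβα,
    forall_notMem_union_compl_iff]
  exact ⟨fun ⟨⟨hE, _⟩, h⟩ => ⟨hE, h⟩, fun ⟨hE, h⟩ => ⟨⟨hE, hβ⟩, h⟩⟩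

lemma subDeltaT_iff_mem_deltaTilde_union_compl (hα : ∀ j ∉ U, α j = cE j)
    (hβ : ∀ j ∉ U, β j = cE j) :
    SubDeltaT E cE U F α β ↔ β ∈ DeltaTilde E (F ∪ Uᶜ) α := by
  have hβα : ∀ j ∉ U, β j = α j := fun j hj => (hβ j hj).trans (hα j hj).symm
  rw [SubDeltaT, IsSubspaceRep, DeltaTilde, Set.mem_sdiff, Set.mem_ofPred_eq,
    Set.mem_singleton_iff, eq_iff_forall_mem_eq_of_forall_notMem_eq hβα,
    forall_mem_union_compl_eq_iff hβα, forall_notMem_union_compl_iff]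
  exact ⟨fun ⟨⟨hE, _⟩, hF, hle, hne⟩ => ⟨⟨hE, hF, hle⟩, hne⟩,
    fun ⟨⟨hE, hF, hle⟩, hne⟩ => ⟨⟨hE, hβ⟩, hF, hle, hne⟩⟩

lemma mem_deltaTilde_union_compl_iff (h : ∀ j ∉ U, β j = α j) :
    β ∈ DeltaTilde E (F ∪ Uᶜ) α ↔ β ∈ DeltaTilde E F α := by
  simp only [DeltaTilde, Set.mem_sdiff, Set.mem_ofPred_eq]
  rw [forall_mem_union_compl_eq_iff h, forall_notMem_union_compl_iff]
  refine and_congr_left' (and_congr_right' (and_congr_right'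
    ⟨fun hle j hjF => ?_, fun hle j _ hjF => hle j hjF⟩))
  by_cases hjU : j ∈ U
  · exact hle j hjU hjF
  · exact (h j hjU).ge

end SubspaceDelta

theorem stmt_13_general {d : ℕ} (E : Set (Fin d → ℕ))
    (cE : Fin d → ℕ)
    (U F : Finset (Fin d))
    (α : Fin d → ℕ) (hα : IsSubspaceRep E cE U α) :
    (∀ β : Fin d → ℕ, (∀ j ∉ U, β j = cE j) →
      ((SubDelta E cE U F α β ↔ β ∈ DeltaSet E (F ∪ Uᶜ) α) ∧
       (SubDeltaT E cE U F α β ↔ β ∈ DeltaTilde E (F ∪ Uᶜ) α))) ∧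
    (∀ G : Finset (Fin d), U \ F ⊆ G → G ⊆ U →
      ∀ β : Fin d → ℕ, IsSubspaceRep E cE U β →
        (SubDeltaT E cE U G α β ↔ β ∈ DeltaTilde E G α)) := by
  refine ⟨fun β hβ => ⟨subDelta_iff_mem_deltaSet hα.2 hβ,
    subDeltaT_iff_mem_deltaTilde_union_compl hα.2 hβ⟩, fun G _ _ β hβ => ?_⟩
  rw [subDeltaT_iff_mem_deltaTilde_union_compl hα.2 hβ.2]
  exact mem_deltaTilde_union_compl_iff fun j hj => (hβ.2 j hj).trans (hα.2 j hj).symm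

theorem stmt_13 {d : ℕ} (hd : 1 ≤ d) (S E : Set (Fin d → ℕ))
    (hS : IsGoodSemigroup S) (hE : IsGoodIdeal S E) (hprop : E ≠ S)
    (cE : Fin d → ℕ) (hcE : IsConductor E cE)
    (U F : Finset (Fin d)) (hU : U.Nonempty) (hF : F ⊂ U)
    (α : Fin d → ℕ) (hα : IsSubspaceRep E cE U α) :
    (∀ β : Fin d → ℕ, (∀ j ∉ U, β j = cE j) →
      ((SubDelta E cE U F α β ↔ β ∈ DeltaSet E (F ∪ Uᶜ) α) ∧
       (SubDeltaT E cE U F α β ↔ β ∈ DeltaTilde E (F ∪ Uᶜ) α))) ∧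
    (∀ G : Finset (Fin d), U \ F ⊆ G → G ⊆ U →
      ∀ β : Fin d → ℕ, IsSubspaceRep E cE U β →
        (SubDeltaT E cE U G α β ↔ β ∈ DeltaTilde E G α)) :=
  stmt_13_general E cE U F α hα
end

section
/- Let S ⊆ ℕ^d be a good semigroup, E ⊆ S a nonempty proper good ideal with conductor c_E, F ⊊ U ⊆ I with F nonempty, α(U) a U-subspace of E, and β(U) ∈ Δ^E_F(α(U)). Then there exist r with 1 ≤ r ≤ |F|, U-subspaces β^(1)(U),…,β^(r)(U) of E, and sets G₁,…,G_r with G_i ⊇ (U \ F) for every i and G₁ ∩ ⋯ ∩ G_r = U \ F, such that β^(i)(U) ∈ Δ^E_{G_i}(α(U)) for every i and α(U) is the complete infimum of β(U), β^(1)(U), …, β^(r)(U). -/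
/-!
For `i ∈ F` let `M i` (`maxEqualitySet`) be the largest `G` with `U \ F ⊆ G ⊆ U` and `i ∉ G`
that is the equality set with `α` of some `δ(U) ∈ Δ^E_G(α(U))`; such sets are closed under union
(take `δ ⊓ δ'`). Applying (G2) to `δ` and `β` at a coordinate `i ∈ G ∩ F` gives an element of `E`
whose equality set with `α` omits `i` but contains `U \ G`; for `δ = α` this shows that `M i`
exists. Hence `j ∉ M i` forces `M i = M j`, so any two distinct sets among the `M i` cover `U`,
while `i ∉ M i`. These at most `|F|` sets, with their witnesses and `β`, exhibit `α(U)` as a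
complete infimum.
-/

variable {d : ℕ} {S E : Set (Fin d → ℕ)} {cE : Fin d → ℕ} {U F G G' : Finset (Fin d)}
  {α β δ δ' : Fin d → ℕ}

namespace SubDelta

theorem mono (hES : E ⊆ S) (h : SubDelta E cE U G α δ) : SubDelta S cE U G α δ :=
  ⟨⟨hES h.1.1, h.1.2⟩, h.2⟩

theorem le (h : SubDelta E cE U G α δ) : ∀ j ∈ U, α j ≤ δ j := by
  intro j hj
  by_cases hjG : j ∈ G
  · exact (h.2.1 j hjG).ge
  · exact (h.2.2 j hj hjG).le

theorem min_eq (h : SubDelta E cE U G α δ) (h' : SubDelta E cE U G' α δ') {j : Fin d}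
    (hj : j ∈ G ∪ G') : α j = min (δ j) (δ' j) := by
  by_cases hjU : j ∈ U
  · have := h.le j hjU
    have := h'.le j hjU
    rcases Finset.mem_union.mp hj with hj | hj
    · have := h.2.1 j hj; omega
    · have := h'.2.1 j hj; omega
  · have := h.1.2 j hjU
    have := h'.1.2 j hjU
    rcases Finset.mem_union.mp hj with hj | hj
    · have := h.2.1 j hj; omega
    · have := h'.2.1 j hj; omega

theorem inf (hE : IsGoodIdeal S E) (h : SubDelta E cE U G α δ) (h' : SubDelta E cE U G' α δ') :
    SubDelta E cE U (G ∪ G') α (δ ⊓ δ') := by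
  refine ⟨⟨hE.2.2.2.1 δ h.1.1 δ' h'.1.1, fun j hj => ?_⟩, fun j hj => ?_, fun j hjU hj => ?_⟩
  · simp [h.1.2 j hj, h'.1.2 j hj]
  · exact (h.min_eq h' hj).symm
  · simp only [Finset.mem_union, not_or] at hj
    exact lt_min (h.2.2 j hjU hj.1) (h'.2.2 j hjU hj.2)

end SubDelta

theorem piecewise_mem_of_isConductor (hE : IsGoodIdeal S E) (hcE : IsConductor E cE)
    {ε : Fin d → ℕ} (hε : ε ∈ E) (hle : ∀ j ∉ U, cE j ≤ ε j) :
    U.piecewise ε cE ∈ E := by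
  classical
  have hζ : U.piecewise (ε + cE) cE ∈ E := hcE.1 _ fun j => by
    by_cases hj : j ∈ U <;> simp [hj]
  convert hE.2.2.2.1 ε hε _ hζ using 1
  funext j
  by_cases hj : j ∈ U
  · simp [hj]
  · simp [hj, hle j hj]

theorem subDelta_piecewise (hE : IsGoodIdeal S E) (hcE : IsConductor E cE)
    {ε : Fin d → ℕ} (hε : ε ∈ E) (hαε : ∀ j ∈ U, α j ≤ ε j) (hcEε : ∀ j ∉ U, cE j ≤ ε j) :
    SubDelta E cE U (U.filter fun j => ε j = α j) α (U.piecewise ε cE) := by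
  refine ⟨⟨piecewise_mem_of_isConductor hE hcE hε hcEε, fun j hj => by simp [hj]⟩,
    fun j hj => ?_, fun j hjU hj => ?_⟩
  · obtain ⟨hjU, hj⟩ := Finset.mem_filter.mp hj
    simp [hjU, hj]
  · have hne : ε j ≠ α j := fun h => hj (Finset.mem_filter.mpr ⟨hjU, h⟩)
    have := hαε j hjU
    simp only [Finset.piecewise_eq_of_mem _ _ _ hjU]
    omega

def IsEqualitySet (E : Set (Fin d → ℕ)) (cE : Fin d → ℕ) (U : Finset (Fin d)) (α : Fin d → ℕ)
    (G : Finset (Fin d)) : Prop :=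
  ∃ δ, SubDelta E cE U G α δ

theorem IsEqualitySet.union (hE : IsGoodIdeal S E) :
    IsEqualitySet E cE U α G → IsEqualitySet E cE U α G' → IsEqualitySet E cE U α (G ∪ G')
  | ⟨_, h⟩, ⟨_, h'⟩ => ⟨_, h.inf hE h'⟩

theorem isEqualitySet_self (hα : IsSubspaceRep E cE U α) : IsEqualitySet E cE U α U :=
  ⟨α, hα, fun _ _ => rfl, fun _ hj hj' => absurd hj hj'⟩

theorem SubDelta.exists_raise_coord (hE : IsGoodIdeal S E) (hF : F ⊂ U)
    (hβ : SubDelta E cE U F α β) (hδ : SubDelta E cE U G α δ) (hUFG : U \ F ⊆ G)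
    {i : Fin d} (hiG : i ∈ G) (hiF : i ∈ F) :
    ∃ ε ∈ E, α i < ε i ∧ (∀ j ∈ U, α j ≤ ε j) ∧ (∀ j ∉ U, cE j ≤ ε j) ∧
      ∀ j ∈ U, j ∉ F ∩ G → ε j = α j := by
  obtain ⟨j₀, hj₀U, hj₀F⟩ := Finset.exists_of_ssubset hF
  have hδβ : δ ≠ β := fun h => by
    have := hδ.2.1 j₀ (hUFG (Finset.mem_sdiff.mpr ⟨hj₀U, hj₀F⟩))
    have := hβ.2.2 j₀ hj₀U hj₀F
    simp_all
  have hδi : δ i = α i := hδ.2.1 i hiG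
  obtain ⟨ε, hεE, hεi, hε⟩ :=
    hE.2.2.2.2 δ hδ.1.1 β hβ.1.1 hδβ i (by rw [hδi, hβ.2.1 i hiF])
  refine ⟨ε, hεE, hδi ▸ hεi, fun j hjU => ?_, fun j hjU => ?_, fun j hjU hj => ?_⟩
  · by_cases hji : j = i
    · subst hji; omega
    · have := hδ.le j hjU
      have := hβ.le j hjU
      have := (hε j hji).1
      omega
  · have hji : j ≠ i := by rintro rfl; exact hjU (hF.subset hiF)
    have := hδ.1.2 j hjU
    have := hβ.1.2 j hjU
    have := (hε j hji).1
    omega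
  -- (G2) makes `ε` equal to `min δ β` wherever `δ` and `β` differ, and one of them equals `α` there
  have hji : j ≠ i := by rintro rfl; exact hj (Finset.mem_inter.mpr ⟨hiF, hiG⟩)
  by_cases hjF : j ∈ F
  · have hjG : j ∉ G := fun hjG => hj (Finset.mem_inter.mpr ⟨hjF, hjG⟩)
    have := hδ.2.2 j hjU hjG
    have := hβ.2.1 j hjF
    have := (hε j hji).2 (by omega)
    omega
  · have := hδ.2.1 j (hUFG (Finset.mem_sdiff.mpr ⟨hjU, hjF⟩))
    have := hβ.2.2 j hjU hjF
    have := (hε j hji).2 (by omega)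
    omega

theorem IsEqualitySet.exists_flip (hE : IsGoodIdeal S E) (hcE : IsConductor E cE) (hF : F ⊂ U)
    (hβ : SubDelta E cE U F α β) (hG : IsEqualitySet E cE U α G) (hUFG : U \ F ⊆ G)
    {i : Fin d} (hiG : i ∈ G) (hiF : i ∈ F) :
    ∃ G' ⊆ U, U \ F ⊆ G' ∧ U \ G ⊆ G' ∧ i ∉ G' ∧ IsEqualitySet E cE U α G' := by
  obtain ⟨δ, hδ⟩ := hG
  obtain ⟨ε, hεE, hεi, hαε, hcEε, hεα⟩ := hβ.exists_raise_coord hE hF hδ hUFG hiG hiF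
  refine ⟨_, Finset.filter_subset _ _, fun j hj => ?_, fun j hj => ?_, fun hi => ?_,
    _, subDelta_piecewise hE hcE hεE hαε hcEε⟩
  · obtain ⟨hjU, hjF⟩ := Finset.mem_sdiff.mp hj
    exact Finset.mem_filter.mpr ⟨hjU, hεα j hjU fun h => hjF (Finset.mem_inter.mp h).1⟩
  · obtain ⟨hjU, hjG⟩ := Finset.mem_sdiff.mp hj
    exact Finset.mem_filter.mpr ⟨hjU, hεα j hjU fun h => hjG (Finset.mem_inter.mp h).2⟩
  · have := (Finset.mem_filter.mp hi).2
    omega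

open Classical in
noncomputable def maxEqualitySet (E : Set (Fin d → ℕ)) (cE : Fin d → ℕ) (U F : Finset (Fin d))
    (α : Fin d → ℕ) (i : Fin d) : Finset (Fin d) :=
  (U.powerset.filter fun G => U \ F ⊆ G ∧ i ∉ G ∧ IsEqualitySet E cE U α G).sup id

theorem subset_maxEqualitySet {i : Fin d} (hGU : G ⊆ U) (hUFG : U \ F ⊆ G) (hiG : i ∉ G)
    (hG : IsEqualitySet E cE U α G) : G ⊆ maxEqualitySet E cE U F α i := by
  classical
  exact Finset.le_sup (f := id)
    (Finset.mem_filter.mpr ⟨Finset.mem_powerset.mpr hGU, hUFG, hiG, hG⟩)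

theorem maxEqualitySet_subset {i : Fin d} : maxEqualitySet E cE U F α i ⊆ U := by
  classical
  exact Finset.sup_le fun G hG => Finset.mem_powerset.mp (Finset.mem_filter.mp hG).1

section
variable (hE : IsGoodIdeal S E) (hcE : IsConductor E cE) (hF : F ⊂ U)
  (hα : IsSubspaceRep E cE U α) (hβ : SubDelta E cE U F α β)
include hE hcE hF hα hβ

theorem maxEqualitySet_spec {i : Fin d} (hi : i ∈ F) :
    U \ F ⊆ maxEqualitySet E cE U F α i ∧ i ∉ maxEqualitySet E cE U F α i ∧
      IsEqualitySet E cE U α (maxEqualitySet E cE U F α i) := by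
  classical
  obtain ⟨G, hGU, hUFG, -, hiG, hG⟩ := (isEqualitySet_self hα).exists_flip hE hcE hF hβ
    Finset.sdiff_subset (hF.subset hi) hi
  have hne :
      (U.powerset.filter fun G => U \ F ⊆ G ∧ i ∉ G ∧ IsEqualitySet E cE U α G).Nonempty :=
    ⟨G, Finset.mem_filter.mpr ⟨Finset.mem_powerset.mpr hGU, hUFG, hiG, hG⟩⟩
  unfold maxEqualitySet
  rw [← Finset.sup'_eq_sup hne]
  refine Finset.sup'_induction (p := fun G => U \ F ⊆ G ∧ i ∉ G ∧ IsEqualitySet E cE U α G) hne _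
    (fun G₁ h₁ G₂ h₂ => ?_) fun G hG => (Finset.mem_filter.mp hG).2
  exact ⟨h₁.1.trans Finset.subset_union_left, by simp [h₁.2.1, h₂.2.1],
    h₁.2.2.union hE h₂.2.2⟩

theorem notMem_maxEqualitySet_comm {i j : Fin d} (hi : i ∈ F) (hj : j ∈ F)
    (hji : j ∉ maxEqualitySet E cE U F α i) : i ∉ maxEqualitySet E cE U F α j := by
  intro hij
  obtain ⟨hUFM, hjM, hM⟩ := maxEqualitySet_spec hE hcE hF hα hβ hj
  obtain ⟨G, hGU, hUFG, hUMG, hiG, hG⟩ := hM.exists_flip hE hcE hF hβ hUFM hij hi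
  exact hji (subset_maxEqualitySet hGU hUFG hiG hG
    (hUMG (Finset.mem_sdiff.mpr ⟨hF.subset hj, hjM⟩)))

theorem maxEqualitySet_eq_of_notMem {i j : Fin d} (hi : i ∈ F) (hj : j ∈ F)
    (hji : j ∉ maxEqualitySet E cE U F α i) :
    maxEqualitySet E cE U F α i = maxEqualitySet E cE U F α j := by
  have hij := notMem_maxEqualitySet_comm hE hcE hF hα hβ hi hj hji
  obtain ⟨hUFi, -, hMi⟩ := maxEqualitySet_spec hE hcE hF hα hβ hi
  obtain ⟨hUFj, -, hMj⟩ := maxEqualitySet_spec hE hcE hF hα hβ hj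
  exact (subset_maxEqualitySet maxEqualitySet_subset hUFi hji hMi).antisymm
    (subset_maxEqualitySet maxEqualitySet_subset hUFj hij hMj)

end

theorem exists_fin_injective_range_eq {ι κ : Type*} [DecidableEq κ] {s : Finset ι}
    (hs : s.Nonempty) (f : ι → κ) :
    ∃ r, 1 ≤ r ∧ r ≤ s.card ∧ ∃ g : Fin r → κ, Function.Injective g ∧ Set.range g = f '' s := by
  refine ⟨(s.image f).card, (hs.image f).card_pos, Finset.card_image_le,
    fun k => ((s.image f).equivFin.symm k).1,
    Subtype.val_injective.comp (s.image f).equivFin.symm.injective, ?_⟩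
  rw [← Finset.coe_image]
  ext y
  refine ⟨?_, fun hy => ⟨(s.image f).equivFin ⟨y, hy⟩, by simp⟩⟩
  rintro ⟨k, rfl⟩
  exact ((s.image f).equivFin.symm k).2

theorem exists_equalitySet_family (hE : IsGoodIdeal S E) (hcE : IsConductor E cE) (hF : F ⊂ U)
    (hα : IsSubspaceRep E cE U α) (hβ : SubDelta E cE U F α β) (hFne : F.Nonempty) :
    ∃ r, 1 ≤ r ∧ r ≤ F.card ∧ ∃ Gs : Fin r → Finset (Fin d),
      (∀ k, U \ F ⊆ Gs k ∧ Gs k ⊂ U ∧ IsEqualitySet E cE U α (Gs k)) ∧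
      (∀ j k, j ≠ k → U ⊆ Gs j ∪ Gs k) ∧ ∀ x ∈ F, ∃ k, x ∉ Gs k := by
  set M := maxEqualitySet E cE U F α
  have hspec : ∀ i ∈ F, U \ F ⊆ M i ∧ i ∉ M i ∧ IsEqualitySet E cE U α (M i) :=
    fun i hi => maxEqualitySet_spec hE hcE hF hα hβ hi
  have heq : ∀ i ∈ F, ∀ j ∈ F, j ∉ M i → M i = M j :=
    fun i hi j hj => maxEqualitySet_eq_of_notMem hE hcE hF hα hβ hi hj
  have hMU : ∀ i, M i ⊆ U := fun i => maxEqualitySet_subset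
  clear_value M
  obtain ⟨r, hr, hrF, Gs, hinj, hrange⟩ := exists_fin_injective_range_eq hFne M
  have hGs : ∀ k, ∃ i ∈ F, M i = Gs k := fun k => hrange.subset (Set.mem_range_self k)
  have hM : ∀ i ∈ F, ∃ k, Gs k = M i := fun i hi => hrange.symm.subset (Set.mem_image_of_mem M hi)
  refine ⟨r, hr, hrF, Gs, fun k => ?_, fun j k hjk x hxU => ?_, fun x hx => ?_⟩
  · obtain ⟨i, hi, hMi⟩ := hGs k
    obtain ⟨hUF, hiM, hMeq⟩ := hspec i hi
    rw [← hMi]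
    exact ⟨hUF, (Finset.ssubset_iff_of_subset (hMU i)).mpr ⟨i, hF.subset hi, hiM⟩, hMeq⟩
  · by_contra hx
    simp only [Finset.mem_union, not_or] at hx
    obtain ⟨a, ha, hMa⟩ := hGs j
    obtain ⟨b, hb, hMb⟩ := hGs k
    rw [← hMa, ← hMb] at hx
    have hxF : x ∈ F := by
      by_contra hxF
      exact hx.1 ((hspec a ha).1 (Finset.mem_sdiff.mpr ⟨hxU, hxF⟩))
    exact hjk (hinj (by rw [← hMa, ← hMb, heq a ha x hxF hx.1, heq b hb x hxF hx.2]))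
  · obtain ⟨k, hk⟩ := hM x hx
    exact ⟨k, hk ▸ (hspec x hx).2.1⟩

theorem subIsCompleteInf_cons {r : ℕ} (hr : 1 ≤ r) {βs : Fin r → Fin d → ℕ}
    {Gs : Fin r → Finset (Fin d)} (hFne : F.Nonempty) (hF : F ⊂ U) (hGsU : ∀ k, Gs k ⊂ U)
    (hUFGs : ∀ k, U \ F ⊆ Gs k) (hβ : SubDelta S cE U F α β)
    (hβs : ∀ k, SubDelta S cE U (Gs k) α (βs k)) (hpair : ∀ j k, j ≠ k → U ⊆ Gs j ∪ Gs k)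
    (hcover : ∀ x ∈ F, ∃ k, x ∉ Gs k) :
    SubIsCompleteInf S cE U α (Fin.cons β βs) := by
  have hUF : ∀ k, U ⊆ F ∪ Gs k := fun k x hx => by
    by_cases hxF : x ∈ F
    · exact Finset.mem_union_left _ hxF
    · exact Finset.mem_union_right _ (hUFGs k (Finset.mem_sdiff.mpr ⟨hx, hxF⟩))
  have hδ : ∀ j, SubDelta S cE U ((Fin.cons F Gs : Fin (r + 1) → Finset (Fin d)) j) α
      ((Fin.cons β βs : Fin (r + 1) → Fin d → ℕ) j) := Fin.cases hβ hβs
  have hcons : ∀ j k : Fin (r + 1), j ≠ k →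
      U ⊆ (Fin.cons F Gs : Fin (r + 1) → Finset (Fin d)) j ∪
        (Fin.cons F Gs : Fin (r + 1) → Finset (Fin d)) k := by
    intro j k hjk
    cases j using Fin.cases <;> cases k using Fin.cases
    · exact absurd rfl hjk
    · exact hUF _
    · rw [Finset.union_comm]; exact hUF _
    · exact hpair _ _ fun h => hjk (congrArg Fin.succ h)
  refine ⟨by omega, Fin.cons F Gs, fun j => ?_, hδ,
    fun j k hjk i hi => (hδ j).min_eq (hδ k) (hcons j k hjk hi), fun x => ?_⟩
  · cases j using Fin.cases
    · exact ⟨hFne, hF⟩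
    · obtain ⟨x, hxU, hxF⟩ := Finset.exists_of_ssubset hF
      exact ⟨⟨x, hUFGs _ (Finset.mem_sdiff.mpr ⟨hxU, hxF⟩)⟩, hGsU _⟩
  · by_cases hxF : x ∈ F
    · obtain ⟨k, hk⟩ := hcover x hxF
      exact ⟨k.succ, by simpa using hk⟩
    · exact ⟨0, by simpa using hxF⟩

theorem stmt_15_general {d : ℕ} (S E : Set (Fin d → ℕ))
    (hE : IsGoodIdeal S E)
    (cE : Fin d → ℕ) (hcE : IsConductor E cE)
    (U F : Finset (Fin d)) (hFne : F.Nonempty) (hF : F ⊂ U)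
    (α β : Fin d → ℕ) (hα : IsSubspaceRep E cE U α)
    (hβ : SubDelta E cE U F α β) :
    ∃ r : ℕ, 1 ≤ r ∧ r ≤ F.card ∧
      ∃ (βs : Fin r → Fin d → ℕ) (G : Fin r → Finset (Fin d)),
        (∀ i, U \ F ⊆ G i) ∧
        (∀ x : Fin d, (∀ i, x ∈ G i) ↔ x ∈ U \ F) ∧
        (∀ i, SubDelta E cE U (G i) α (βs i)) ∧
        SubIsCompleteInf S cE U α (Fin.cons β βs) := by
  obtain ⟨r, hr, hrF, Gs, hGs, hpair, hcover⟩ := exists_equalitySet_family hE hcE hF hα hβ hFne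
  choose βs hβs using fun k => (hGs k).2.2
  refine ⟨r, hr, hrF, βs, Gs, fun k => (hGs k).1,
    fun x => ⟨fun hx => ?_, fun hx k => (hGs k).1 hx⟩, hβs,
    subIsCompleteInf_cons hr hFne hF (fun k => (hGs k).2.1) (fun k => (hGs k).1)
      (hβ.mono hE.1) (fun k => (hβs k).mono hE.1) hpair hcover⟩
  have hxU : x ∈ U := (hGs ⟨0, hr⟩).2.1.subset (hx _)
  exact Finset.mem_sdiff.mpr ⟨hxU, fun hxF => (hcover x hxF).elim fun k hk => hk (hx k)⟩

theorem stmt_15 {d : ℕ} (hd : 1 ≤ d) (S E : Set (Fin d → ℕ))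
    (hS : IsGoodSemigroup S) (hE : IsGoodIdeal S E) (hprop : E ≠ S)
    (cE : Fin d → ℕ) (hcE : IsConductor E cE)
    (U F : Finset (Fin d)) (hU : U.Nonempty) (hFne : F.Nonempty) (hF : F ⊂ U)
    (α β : Fin d → ℕ) (hα : IsSubspaceRep E cE U α)
    (hβ : SubDelta E cE U F α β) :
    ∃ r : ℕ, 1 ≤ r ∧ r ≤ F.card ∧
      ∃ (βs : Fin r → Fin d → ℕ) (G : Fin r → Finset (Fin d)),
        (∀ i, U \ F ⊆ G i) ∧
        (∀ x : Fin d, (∀ i, x ∈ G i) ↔ x ∈ U \ F) ∧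
        (∀ i, SubDelta E cE U (G i) α (βs i)) ∧
        SubIsCompleteInf S cE U α (Fin.cons β βs) :=
  stmt_15_general S E hE cE hcE U F hFne hF α β hα hβ
end
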